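/- arXiv:2312.01969 — 6 statements merged into one kernel-verified Lean document; each statement's English description precedes it below -/
import Mathlib

section
/- Let m be a positive integer, let H0 ⊆ {1,…,m} be a set of m0 null indices, and let p_1,…,p_m be independent [0,1]-valued random variables such that p_i is uniformly distributed on [0,1] for every i ∈ H0. Then for every α ∈ (0,1], the Benjamini–Hochberg procedure at level α applied to (p_1,…,p_m) achieves exact FDR control: FDR = m0·α/m. -/
open MeasureTheory ProbabilityTheory Finset Filter
open scoped Classical ENNReal

/-- Hypothesis `i` is rejected by the Benjamini–Hochberg procedure at level `α`
applied to the p-values `p` (i.e. `p i ≤ ε_BH` where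
`ε_BH = max {α k / m : p_(k) ≤ α k / m, 1 ≤ k ≤ m}`, no rejection if this set is empty). -/
def bhRejects (m : ℕ) (α : ℝ) (p : Fin m → ℝ) (i : Fin m) : Prop :=
  ∃ k ∈ Finset.Icc 1 m,
    p i ≤ α * k / m ∧
      k ≤ (Finset.univ.filter fun j => p j ≤ α * (k : ℝ) / m).card

/-- Number of rejections of the BH procedure at level `α`. -/
noncomputable def bhR (m : ℕ) (α : ℝ) (p : Fin m → ℝ) : ℕ :=
  (Finset.univ.filter fun i => bhRejects m α p i).card

/-- Number of false positives (rejected null hypotheses) of BH at level `α`. -/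
noncomputable def bhFP (m : ℕ) (α : ℝ) (H0 : Finset (Fin m)) (p : Fin m → ℝ) : ℕ :=
  (H0.filter fun i => bhRejects m α p i).card

/-- False discovery proportion of BH at level `α` (with the convention 0/0 = 0). -/
noncomputable def bhFDP (m : ℕ) (α : ℝ) (H0 : Finset (Fin m)) (p : Fin m → ℝ) : ℝ :=
  (bhFP m α H0 p : ℝ) / (bhR m α p : ℝ)

/-!
Write `FDP = ∑_{i ∈ H0} 1{i rejected} / R`. For a fixed `i`, let `Rᵢ` be the number of BH
rejections after `pᵢ` is replaced by `0`. Then `i` is rejected iff `pᵢ ≤ α Rᵢ / m`, and in that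
case `R = Rᵢ`. Since `Rᵢ` is a function of `(pⱼ)_{j ≠ i}`, it is independent of the uniform `pᵢ`,
so `E[1{pᵢ ≤ α Rᵢ / m} / Rᵢ] = E[(α Rᵢ / m) / Rᵢ] = α / m`. Summing over `H0` gives `m₀ α / m`.
-/

theorem ProbabilityTheory.iIndepFun.indepFun_update {Ω ι β : Type*} [MeasurableSpace Ω]
    {μ : Measure Ω} [Fintype ι] [DecidableEq ι] [MeasurableSpace β] {f : ι → Ω → β}
    (hf : iIndepFun f μ) (hmeas : ∀ i, Measurable (f i)) (i : ι) (b : β) :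
    IndepFun (f i) (fun ω => Function.update (fun j => f j ω) i b) μ := by
  have hind := hf.indepFun_finset {i} {i}ᶜ disjoint_compl_right hmeas
  let extend : (({i}ᶜ : Finset ι) → β) → ι → β := fun y j =>
    if h : j = i then b else y ⟨j, by simp [h]⟩
  have hextend : Measurable extend := by
    refine measurable_pi_lambda _ fun j => ?_
    by_cases h : j = i
    · simp only [extend, dif_pos h, measurable_const]
    · simp only [extend, dif_neg h]; exact measurable_pi_apply _
  convert hind.comp (measurable_pi_apply ⟨i, mem_singleton_self i⟩) hextend using 1
  · rfl
  funext ω j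
  by_cases h : j = i
  · subst h; simp [extend]
  · simp [extend, h]

theorem measureReal_restrict_Icc_Iic {c : ℝ} (hc : c ∈ Set.Icc (0 : ℝ) 1) :
    (volume.restrict (Set.Icc (0 : ℝ) 1)).real (Set.Iic c) = c := by
  rw [measureReal_restrict_apply measurableSet_Iic, Set.inter_comm, ← Set.Ici_inter_Iic,
    Set.inter_assoc, Set.Iic_inter_Iic, inf_eq_right.2 hc.2, Set.Ici_inter_Iic,
    Real.volume_real_Icc_of_le hc.1, sub_zero]

theorem integral_ite_le_of_indepFun {Ω β : Type*} [MeasurableSpace Ω] [MeasurableSpace β]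
    {μ : Measure Ω} [IsFiniteMeasure μ] {U : Ω → ℝ} {V : Ω → β} (hU : Measurable U)
    (hV : Measurable V) (hUV : IndepFun U V μ)
    (hlaw : μ.map U = volume.restrict (Set.Icc (0 : ℝ) 1)) {c h : β → ℝ} (hc : Measurable c)
    (hc01 : ∀ y, c y ∈ Set.Icc (0 : ℝ) 1) (hh : Integrable h (μ.map V)) :
    ∫ ω, (if U ω ≤ c (V ω) then h (V ω) else 0) ∂μ = ∫ ω, c (V ω) * h (V ω) ∂μ := by
  set ν := volume.restrict (Set.Icc (0 : ℝ) 1)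
  let F : ℝ × β → ℝ := {z | z.1 ≤ c z.2}.indicator fun z => h z.2
  have hprod : μ.map (fun ω => (U ω, V ω)) = ν.prod (μ.map V) := by
    rw [← hlaw]
    exact (indepFun_iff_map_prod_eq_prod_map_map hU.aemeasurable hV.aemeasurable).1 hUV
  have hF : Integrable F (ν.prod (μ.map V)) :=
    (hh.comp_snd _).indicator (measurableSet_le measurable_fst (hc.comp measurable_snd))
  have hslice : ∀ y, ∫ t, F (t, y) ∂ν = c y * h y := fun y => by
    change ∫ t, (Set.Iic (c y)).indicator (fun _ => h y) t ∂ν = _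
    rw [integral_indicator_const _ measurableSet_Iic, measureReal_restrict_Icc_Iic (hc01 y),
      smul_eq_mul]
  calc ∫ ω, (if U ω ≤ c (V ω) then h (V ω) else 0) ∂μ
      = ∫ ω, F (U ω, V ω) ∂μ := rfl
    _ = ∫ z, F z ∂(ν.prod (μ.map V)) := by
      rw [← hprod, integral_map (hU.prodMk hV).aemeasurable (hprod ▸ hF.aestronglyMeasurable)]
    _ = ∫ y, c y * h y ∂(μ.map V) := by
      rw [integral_prod_symm F hF]
      simp only [hslice]
    _ = ∫ ω, c (V ω) * h (V ω) ∂μ :=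
      integral_map hV.aemeasurable (hc.aestronglyMeasurable.mul hh.aestronglyMeasurable)

section

variable {m : ℕ} {α : ℝ}

noncomputable def bhCount (m : ℕ) (α : ℝ) (x : Fin m → ℝ) (k : ℕ) : ℕ :=
  #{j | x j ≤ α * k / m}

-- `k ≤ bhCount m α x k` is the condition `x_(k) ≤ α k / m` on the order statistics.
noncomputable def bhCandidates (m : ℕ) (α : ℝ) (x : Fin m → ℝ) : Finset ℕ :=
  {k ∈ Icc 1 m | k ≤ bhCount m α x k}

theorem bhRejects_iff_exists_mem_bhCandidates {x : Fin m → ℝ} {i : Fin m} :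
    bhRejects m α x i ↔ ∃ k ∈ bhCandidates m α x, x i ≤ α * k / m := by
  unfold bhRejects bhCandidates bhCount
  simp only [Finset.mem_filter]
  exact exists_congr fun k => by tauto

theorem bhCount_le (x : Fin m → ℝ) (k : ℕ) : bhCount m α x k ≤ m :=
  (card_filter_le _ _).trans_eq (card_fin m)

theorem bhR_le (x : Fin m → ℝ) : bhR m α x ≤ m :=
  (card_filter_le _ _).trans_eq (card_fin m)

theorem bhCount_mono (hα : 0 ≤ α) (x : Fin m → ℝ) : Monotone (bhCount m α x) := by
  intro k l hkl
  refine card_le_card fun j hj => ?_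
  simp only [Finset.mem_filter, Finset.mem_univ, true_and] at hj ⊢
  exact hj.trans (by gcongr)

theorem bhCount_sup_bhCandidates (hα : 0 ≤ α) {x : Fin m → ℝ} (hS : (bhCandidates m α x).Nonempty) :
    bhCount m α x ((bhCandidates m α x).sup id) = (bhCandidates m α x).sup id := by
  obtain ⟨K, hKmem, hsup⟩ : ∃ K ∈ bhCandidates m α x, (bhCandidates m α x).sup id = K :=
    Finset.exists_mem_eq_sup _ hS id
  rw [hsup]
  refine (Finset.mem_filter.1 hKmem).2.lt_or_eq.elim (fun hlt => ?_) Eq.symm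
  have hKm : K < m := hlt.trans_le (bhCount_le x K)
  have : K + 1 ∈ bhCandidates m α x := Finset.mem_filter.2
    ⟨mem_Icc.2 ⟨by omega, by omega⟩, hlt.trans_le (bhCount_mono hα x K.le_succ)⟩
  have := (Finset.le_sup (f := id) this).trans_eq hsup
  simp only [id] at this
  omega

theorem bhR_eq_sup_bhCandidates (hα : 0 ≤ α) (x : Fin m → ℝ) :
    bhR m α x = (bhCandidates m α x).sup id := by
  rcases (bhCandidates m α x).eq_empty_or_nonempty with hS | hS
  · simp [bhR, bhRejects_iff_exists_mem_bhCandidates, hS]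
  obtain ⟨K, hKmem, hsup⟩ : ∃ K ∈ bhCandidates m α x, (bhCandidates m α x).sup id = K :=
    Finset.exists_mem_eq_sup _ hS id
  have hrej : ∀ i, bhRejects m α x i ↔ x i ≤ α * K / m := by
    refine fun i => bhRejects_iff_exists_mem_bhCandidates.trans
      ⟨fun ⟨k, hk, hki⟩ => hki.trans ?_, fun h => ⟨K, hKmem, h⟩⟩
    have : k ≤ K := (Finset.le_sup (f := id) hk).trans_eq hsup
    gcongr
  rw [← bhCount_sup_bhCandidates hα hS, hsup, bhR, bhCount]
  simp only [hrej]

theorem le_bhR_of_mem_bhCandidates (hα : 0 ≤ α) {x : Fin m → ℝ} {k : ℕ}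
    (hk : k ∈ bhCandidates m α x) : k ≤ bhR m α x :=
  bhR_eq_sup_bhCandidates hα x ▸ Finset.le_sup (f := id) hk

theorem bhR_mem_bhCandidates (hα : 0 ≤ α) {x : Fin m → ℝ} (hR : 0 < bhR m α x) :
    bhR m α x ∈ bhCandidates m α x := by
  rw [bhR_eq_sup_bhCandidates hα] at hR ⊢
  have hS : (bhCandidates m α x).Nonempty := by
    by_contra h
    simp [Finset.not_nonempty_iff_eq_empty.1 h] at hR
  obtain ⟨K, hKmem, hsup⟩ := Finset.exists_mem_eq_sup _ hS id
  rwa [hsup]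

theorem bhRejects_iff (hα : 0 ≤ α) {x : Fin m → ℝ} {i : Fin m} :
    bhRejects m α x i ↔ 0 < bhR m α x ∧ x i ≤ α * bhR m α x / m := by
  refine bhRejects_iff_exists_mem_bhCandidates.trans
    ⟨fun ⟨k, hk, hki⟩ => ?_, fun ⟨hR, h⟩ => ⟨_, bhR_mem_bhCandidates hα hR, h⟩⟩
  have hkR := le_bhR_of_mem_bhCandidates hα hk
  have hk1 : 1 ≤ k := (Finset.mem_Icc.1 (Finset.mem_filter.1 hk).1).1
  exact ⟨by omega, hki.trans (by gcongr)⟩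

theorem bhCount_le_bhCount_update_zero (hα : 0 ≤ α) (x : Fin m → ℝ) (i : Fin m) (k : ℕ) :
    bhCount m α x k ≤ bhCount m α (Function.update x i 0) k := by
  refine card_le_card fun j hj => ?_
  simp only [Finset.mem_filter, Finset.mem_univ, true_and] at hj ⊢
  rcases eq_or_ne j i with rfl | hji
  · rw [Function.update_self]; positivity
  · rwa [Function.update_of_ne hji]

theorem bhCount_update_zero_of_le (hα : 0 ≤ α) {x : Fin m → ℝ} {i : Fin m} {k : ℕ}
    (h : x i ≤ α * k / m) : bhCount m α (Function.update x i 0) k = bhCount m α x k := by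
  refine congrArg card (filter_congr fun j _ => ?_)
  rcases eq_or_ne j i with rfl | hji
  · simp only [Function.update_self, h, iff_true]; positivity
  · rw [Function.update_of_ne hji]

theorem bhR_le_bhR_update_zero (hα : 0 ≤ α) (x : Fin m → ℝ) (i : Fin m) :
    bhR m α x ≤ bhR m α (Function.update x i 0) := by
  rw [bhR_eq_sup_bhCandidates hα, bhR_eq_sup_bhCandidates hα]
  refine Finset.sup_mono fun k hk => ?_
  obtain ⟨hk, hkcount⟩ := Finset.mem_filter.1 hk
  exact Finset.mem_filter.2 ⟨hk, hkcount.trans (bhCount_le_bhCount_update_zero hα x i k)⟩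

theorem bhR_update_zero_pos (hα : 0 ≤ α) (x : Fin m → ℝ) (i : Fin m) :
    0 < bhR m α (Function.update x i 0) := by
  refine le_bhR_of_mem_bhCandidates hα (Finset.mem_filter.2 ⟨mem_Icc.2 ⟨le_rfl, i.pos⟩, ?_⟩)
  refine card_pos.2 ⟨i, ?_⟩
  simp only [Finset.mem_filter, Finset.mem_univ, true_and, Function.update_self]
  positivity

theorem bhR_update_zero_le_bhR (hα : 0 ≤ α) {x : Fin m → ℝ} {i : Fin m}
    (h : x i ≤ α * bhR m α (Function.update x i 0) / m) :
    bhR m α (Function.update x i 0) ≤ bhR m α x := by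
  obtain ⟨hK, hKcount⟩ := Finset.mem_filter.1 (bhR_mem_bhCandidates hα (bhR_update_zero_pos hα x i))
  refine le_bhR_of_mem_bhCandidates hα (Finset.mem_filter.2 ⟨hK, ?_⟩)
  rwa [← bhCount_update_zero_of_le hα h]

theorem bhRejects_iff_le_bhR_update_zero (hα : 0 ≤ α) {x : Fin m → ℝ} {i : Fin m} :
    bhRejects m α x i ↔ x i ≤ α * bhR m α (Function.update x i 0) / m := by
  rw [bhRejects_iff hα]
  refine ⟨fun ⟨_, h⟩ => h.trans ?_, fun h => ?_⟩
  · gcongr; exact bhR_le_bhR_update_zero hα x i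
  · have hle := bhR_update_zero_le_bhR hα h
    exact ⟨(bhR_update_zero_pos hα x i).trans_le hle, h.trans (by gcongr)⟩

theorem bhR_eq_bhR_update_zero_of_bhRejects (hα : 0 ≤ α) {x : Fin m → ℝ} {i : Fin m}
    (h : bhRejects m α x i) : bhR m α x = bhR m α (Function.update x i 0) :=
  (bhR_le_bhR_update_zero hα x i).antisymm
    (bhR_update_zero_le_bhR hα ((bhRejects_iff_le_bhR_update_zero hα).1 h))

theorem ite_bhRejects_eq_update_zero (hα : 0 ≤ α) (x : Fin m → ℝ) (i : Fin m) :
    (if bhRejects m α x i then (bhR m α x : ℝ)⁻¹ else 0) =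
      if x i ≤ α * bhR m α (Function.update x i 0) / m
      then (bhR m α (Function.update x i 0) : ℝ)⁻¹ else 0 := by
  by_cases h : bhRejects m α x i
  · rw [if_pos h, if_pos ((bhRejects_iff_le_bhR_update_zero hα).1 h),
      bhR_eq_bhR_update_zero_of_bhRejects hα h]
  · rw [if_neg h, if_neg (mt (bhRejects_iff_le_bhR_update_zero hα).2 h)]

theorem measurable_bhCount (k : ℕ) : Measurable fun x : Fin m → ℝ => bhCount m α x k := by
  simp only [bhCount, card_filter]
  exact Finset.measurable_sum _ fun j _ => Measurable.ite
    (measurableSet_le (measurable_pi_apply j) measurable_const) measurable_const measurable_const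

theorem measurableSet_bhRejects (i : Fin m) :
    MeasurableSet {x : Fin m → ℝ | bhRejects m α x i} := by
  simp only [bhRejects, Set.ofPred_exists, Set.ofPred_and]
  exact .iUnion fun k => (MeasurableSet.const _).inter <|
    (measurableSet_le (measurable_pi_apply i) measurable_const).inter
      (measurable_bhCount k measurableSet_Ici)

theorem measurable_bhR : Measurable fun x : Fin m → ℝ => bhR m α x := by
  simp only [bhR, card_filter]
  exact Finset.measurable_sum _ fun i _ =>
    Measurable.ite (measurableSet_bhRejects i) measurable_const measurable_const

theorem measurable_bhR_real : Measurable fun x : Fin m → ℝ => (bhR m α x : ℝ) :=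
  measurable_from_top.comp measurable_bhR

theorem integrable_ite_bhRejects {Ω : Type*} [MeasurableSpace Ω] {μ : Measure Ω}
    [IsFiniteMeasure μ] {X : Ω → Fin m → ℝ} (hX : Measurable X) (i : Fin m) :
    Integrable (fun ω => if bhRejects m α (X ω) i then (bhR m α (X ω) : ℝ)⁻¹ else 0) μ := by
  refine .of_bound ((Measurable.ite (measurableSet_bhRejects i) measurable_bhR_real.inv
    measurable_const).comp hX).aestronglyMeasurable 1 (ae_of_all _ fun ω => ?_)
  split_ifs <;> simp [Nat.cast_inv_le_one]

theorem bhFDP_eq_sum (H0 : Finset (Fin m)) (x : Fin m → ℝ) :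
    bhFDP m α H0 x = ∑ i ∈ H0, if bhRejects m α x i then (bhR m α x : ℝ)⁻¹ else 0 := by
  rw [bhFDP, bhFP, card_filter, Nat.cast_sum, sum_div]
  refine sum_congr rfl fun i _ => ?_
  split_ifs <;> simp

theorem integral_ite_bhRejects {Ω : Type*} [MeasurableSpace Ω] {μ : Measure Ω}
    (hα0 : 0 ≤ α) (hα1 : α ≤ 1) {p : Fin m → Ω → ℝ} (hmeas : ∀ i, Measurable (p i))
    (hindep : iIndepFun p μ) {i : Fin m}
    (hunif : μ.map (p i) = volume.restrict (Set.Icc (0 : ℝ) 1)) :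
    ∫ ω, (if bhRejects m α (fun j => p j ω) i then (bhR m α (fun j => p j ω) : ℝ)⁻¹ else 0) ∂μ
      = α / m := by
  have := hindep.isProbabilityMeasure
  let R : (Fin m → ℝ) → ℝ := fun y => bhR m α y
  let V : Ω → Fin m → ℝ := fun ω => Function.update (fun j => p j ω) i 0
  have hV : Measurable V := measurable_pi_lambda _ fun j => by
    rcases eq_or_ne j i with rfl | hji
    · simp only [V, Function.update_self, measurable_const]
    · simp only [V, Function.update_of_ne hji, hmeas j]
  have hthreshold : ∀ y, α * R y / m ∈ Set.Icc (0 : ℝ) 1 := fun y =>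
    ⟨by positivity, div_le_one_of_le₀ ((mul_le_of_le_one_left (Nat.cast_nonneg _) hα1).trans
      (Nat.cast_le.2 (bhR_le y))) (Nat.cast_nonneg _)⟩
  have hinv : Integrable (fun y => (R y)⁻¹) (μ.map V) :=
    .of_bound measurable_bhR_real.inv.aestronglyMeasurable 1
      (ae_of_all _ fun y => by simp [R, Nat.cast_inv_le_one])
  have hcancel : ∀ ω, α * R (V ω) / m * (R (V ω))⁻¹ = α / m := fun ω => by
    have : R (V ω) ≠ 0 := Nat.cast_ne_zero.2 (bhR_update_zero_pos hα0 _ i).ne'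
    field_simp
  calc _ = ∫ ω, (if p i ω ≤ α * R (V ω) / m then (R (V ω))⁻¹ else 0) ∂μ := by
        simp_rw [ite_bhRejects_eq_update_zero hα0]; rfl
    _ = ∫ ω, α * R (V ω) / m * (R (V ω))⁻¹ ∂μ :=
        integral_ite_le_of_indepFun (hmeas i) hV (hindep.indepFun_update hmeas i 0) hunif
          ((measurable_bhR_real.const_mul α).div_const _) hthreshold hinv
    _ = α / m := by simp [hcancel]

end

theorem bh_exact_fdr_control_general
    {Ω : Type*} [MeasurableSpace Ω] (μ : Measure Ω)
    (m m0 : ℕ) (H0 : Finset (Fin m)) (hcard : H0.card = m0)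
    (p : Fin m → Ω → ℝ) (hmeas : ∀ i, Measurable (p i))
    (hindep : iIndepFun p μ)
    (hunif : ∀ i ∈ H0, μ.map (p i) = volume.restrict (Set.Icc (0 : ℝ) 1))
    (α : ℝ) (hα : α ∈ Set.Ioc (0 : ℝ) 1) :
    ∫ ω, bhFDP m α H0 (fun i => p i ω) ∂μ = m0 * α / m := by
  have := hindep.isProbabilityMeasure
  have hX : Measurable fun ω i => p i ω := measurable_pi_lambda _ hmeas
  simp_rw [bhFDP_eq_sum]
  rw [integral_finsetSum _ fun i _ => integrable_ite_bhRejects hX i,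
    sum_congr rfl fun i hi => integral_ite_bhRejects hα.1.le hα.2 hmeas hindep (hunif i hi),
    sum_const, hcard, nsmul_eq_mul, mul_div_assoc]

/-- with independent p-values whose null coordinates are uniform on
`[0,1]`, the BH procedure at level `α` achieves exact FDR control `FDR = m0 * α / m`. -/
theorem bh_exact_fdr_control
    {Ω : Type*} [MeasurableSpace Ω] (μ : Measure Ω) [IsProbabilityMeasure μ]
    (m m0 : ℕ) (hm : 0 < m) (H0 : Finset (Fin m)) (hcard : H0.card = m0)
    (p : Fin m → Ω → ℝ) (hmeas : ∀ i, Measurable (p i))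
    (hrange : ∀ i ω, p i ω ∈ Set.Icc (0 : ℝ) 1)
    (hindep : iIndepFun p μ)
    (hunif : ∀ i ∈ H0, μ.map (p i) = volume.restrict (Set.Icc (0 : ℝ) 1))
    (α : ℝ) (hα : α ∈ Set.Ioc (0 : ℝ) 1) :
    ∫ ω, bhFDP m α H0 (fun i => p i ω) ∂μ = m0 * α / m :=
  bh_exact_fdr_control_general μ m m0 H0 hcard p hmeas hindep hunif α hα
end

section
/- Let m, n, m0 be integers with m0 ≤ m, let X_1,…,X_m be independent random variables of which the m0 variables indexed by the null set H0 have distribution P0, and for each i let p̂_i be the empirical p-value of X_i computed from its own calibration set {Z_{i,1},…,Z_{i,n}} of n i.i.d. P0 points, all calibration sets being mutually independent and independent of (X_1,…,X_m), with a scoring function whose reference score distribution is atomless (so no ties occur a.s.). For a null index i, let R(i) denote the number of rejections made by BH at level α when p̂_i is replaced by 0. Then for every α ∈ (0,1], the FDR of the BH procedure at level α applied to (p̂_1,…,p̂_m) equals m0 · Σ_{k=1}^m [ (⌊αkn/m⌋ + 1)/((n+1)·k) ] · P(R(i) = k). -/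
/-!
When the null p-value `p i` is lowered to `0`, BH makes `R(i)` rejections, and `i` is rejected
exactly when `p i ≤ α R(i) / m`, in which case `R = R(i)`. Hence
`FDP = ∑_{i ∈ H0} ∑_k 1[p i ≤ α k / m, R(i) = k] / k`. Each p-value only depends on its own block
(test point and calibration set), so the p-values are independent and `R(i)`, a function of the
other p-values, is independent of `p i`; swapping two null blocks shows that the law of `R(i)`
does not depend on the null index `i`. Finally, a null test score and its `n` calibration scores
are i.i.d. without ties, so by exchangeability the rank of the test score among them is uniform,
which gives `P(p i ≤ α k / m) = (⌊α k n / m⌋ + 1) / (n + 1)`.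
-/

open MeasureTheory ProbabilityTheory Finset
open scoped Classical ENNReal

/-- Empirical p-value of a point `x` with respect to the calibration set `z`. -/
noncomputable def empPval {𝒳 : Type*} (n : ℕ) (a : 𝒳 → ℝ) (x : 𝒳) (z : Fin n → 𝒳) : ℝ :=
  (1 / (n : ℝ)) * ∑ u : Fin n, if a x ≤ a (z u) then (1 : ℝ) else 0

namespace ProbabilityTheory

variable {Ω ι β : Type*} [MeasurableSpace Ω] [MeasurableSpace β] {μ : Measure Ω}
  [Fintype ι] {f : ι → Ω → β}

lemma iIndepFun.indepFun_update_s3 [DecidableEq ι] (h : iIndepFun f μ) (hf : ∀ j, Measurable (f j))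
    (i : ι) (c : β) : IndepFun (f i) (fun ω => Function.update (fun j => f j ω) i c) μ := by
  have hST : Disjoint ({i} : Finset ι) {i}ᶜ := disjoint_compl_right
  let extend : (({i}ᶜ : Finset ι) → β) → ι → β := fun w j =>
    if hj : j = i then c else w ⟨j, by simpa using hj⟩
  have hextend : Measurable extend := by
    refine measurable_pi_lambda _ fun j => ?_
    by_cases hj : j = i
    · simp only [extend, hj, dif_pos]; exact measurable_const
    · simp only [extend, hj, dif_neg, not_false_eq_true]; exact measurable_pi_apply _
  have hupdate : (fun ω => Function.update (fun j => f j ω) i c)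
      = extend ∘ fun ω (j : ({i}ᶜ : Finset ι)) => f j ω := by
    ext ω j
    by_cases hj : j = i <;> simp [extend, hj]
  rw [hupdate]
  exact (h.indepFun_finset _ _ hST hf).comp (measurable_pi_apply ⟨i, mem_singleton_self i⟩)
    hextend

lemma iIndepFun.identDistrib_comp_equiv (h : iIndepFun f μ) (hf : ∀ j, AEMeasurable (f j) μ)
    (σ : ι ≃ ι) (hσ : ∀ j, μ.map (f (σ j)) = μ.map (f j)) :
    IdentDistrib (fun ω j => f (σ j) ω) (fun ω j => f j ω) μ μ where
  aemeasurable_fst := aemeasurable_pi_lambda _ fun j => hf (σ j)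
  aemeasurable_snd := aemeasurable_pi_lambda _ hf
  map_eq := by
    rw [(h.precomp σ.injective).map_fun_eq_pi_map fun j => hf (σ j), h.map_fun_eq_pi_map hf]
    simp_rw [hσ]

omit [Fintype ι] in
lemma IndepFun.measure_eq_eq_zero [IsFiniteMeasure μ] [MeasurableEq β] {X Y : Ω → β}
    (h : IndepFun X Y μ) (hX : Measurable X) (hY : Measurable Y) [NullSingletonClass (μ.map Y)] :
    μ {ω | X ω = Y ω} = 0 := by
  have hmap := (indepFun_iff_map_prod_eq_prod_map_map hX.aemeasurable hY.aemeasurable).1 h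
  have hdiag : MeasurableSet {q : β × β | q.1 = q.2} := measurableSet_diagonal
  rw [← Set.preimage_ofPred_eq (f := fun ω => (X ω, Y ω)) (p := fun q => q.1 = q.2),
    ← Measure.map_apply (hX.prodMk hY) hdiag, hmap, Measure.prod_apply hdiag]
  simp

omit [Fintype ι] in
lemma iIndepFun.curry {κ : ι → Type*} {𝓧 : (i : ι) → κ i → Type*}
    [∀ i j, MeasurableSpace (𝓧 i j)] {X : (i : ι) → (j : κ i) → Ω → 𝓧 i j}
    (hX : ∀ i j, Measurable (X i j)) (h : iIndepFun (fun p : (i : ι) × κ i => X p.1 p.2) μ) :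
    iIndepFun (fun i ω => (X i · ω)) μ := by
  have := h.isProbabilityMeasure
  have : ∀ i j, IsProbabilityMeasure (μ.map (X i j)) :=
    fun i j => Measure.isProbabilityMeasure_map (hX i j).aemeasurable
  have hcurry : MeasurableEquiv.piCurry 𝓧 ∘ (fun ω p => X p.1 p.2 ω) = fun ω i j => X i j ω := by
    ext; simp [Sigma.curry]
  rw [iIndepFun_iff_map_fun_eq_infinitePi_map (by fun_prop), ← hcurry,
    ← Measure.map_map (by fun_prop) (by fun_prop),
    h.map_fun_eq_infinitePi_map fun p => hX p.1 p.2,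
    Measure.infinitePi_map_piCurry fun i j => μ.map (X i j)]
  congrm Measure.infinitePi fun i => ?_
  rw [(h.precomp sigma_mk_injective).map_fun_eq_infinitePi_map fun j => hX i j]

end ProbabilityTheory

section Rank

variable {ι γ : Type*} [Fintype ι] [LinearOrder γ]

def rankAbove (w : ι → γ) (v : ι) : ℕ := (univ.filter fun u => w v < w u).card

lemma rankAbove_comp_equiv (w : ι → γ) (σ : ι ≃ ι) (v : ι) :
    rankAbove (w ∘ σ) v = rankAbove w (σ v) := by
  simp only [rankAbove, card_filter, Function.comp_apply]
  exact Equiv.sum_comp σ fun u => if w (σ v) < w u then 1 else 0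

lemma rankAbove_lt_card (w : ι → γ) (v : ι) : rankAbove w v < Fintype.card ι :=
  card_lt_univ_of_notMem (x := v) (by simp)

lemma rankAbove_lt_rankAbove {w : ι → γ} {v v' : ι} (h : w v < w v') :
    rankAbove w v' < rankAbove w v := by
  refine card_lt_card ⟨fun u hu => ?_, fun hsub => ?_⟩
  · simp only [mem_filter, mem_univ, true_and] at hu ⊢
    exact h.trans hu
  · have hv' := hsub (show v' ∈ univ.filter fun u => w v < w u by simpa using h)
    simp at hv'

lemma rankAbove_injective {w : ι → γ} (hw : Function.Injective w) :
    Function.Injective (rankAbove w) := by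
  intro v v' h
  by_contra hne
  rcases (hw.ne hne).lt_or_gt with hlt | hlt
  · exact (rankAbove_lt_rankAbove hlt).ne h.symm
  · exact (rankAbove_lt_rankAbove hlt).ne h

lemma card_rankAbove_eq {w : ι → γ} (hw : Function.Injective w) {r : ℕ}
    (hr : r < Fintype.card ι) : (univ.filter fun v => rankAbove w v = r).card = 1 := by
  let f : ι → Fin (Fintype.card ι) := fun v => ⟨rankAbove w v, rankAbove_lt_card w v⟩
  have hf : Function.Bijective f := by
    refine (Fintype.bijective_iff_injective_and_card f).2 ⟨fun v v' h => ?_, by simp⟩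
    exact rankAbove_injective hw (Fin.val_eq_of_eq h)
  obtain ⟨v, hv⟩ := hf.2 ⟨r, hr⟩
  rw [card_eq_one]
  refine ⟨v, eq_singleton_iff_unique_mem.2 ⟨by simpa [f, Fin.ext_iff] using hv, fun v' hv' => ?_⟩⟩
  exact hf.1 (Fin.ext ((mem_filter.1 hv').2.trans (Fin.val_eq_of_eq hv).symm))

lemma card_le_succ_eq_rankAbove {n : ℕ} {w : Fin (n + 1) → γ} (hw : Function.Injective w) :
    (univ.filter fun u : Fin n => w 0 ≤ w u.succ).card = rankAbove w 0 := by
  rw [rankAbove, Fin.card_filter_univ_succ', if_neg (lt_irrefl _), zero_add]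
  congr 1
  refine filter_congr fun u _ => ?_
  exact (hw.ne (Fin.succ_ne_zero u).symm).le_iff_lt

end Rank

section RankLaw

variable {Ω : Type*} [MeasurableSpace Ω] {μ : Measure Ω} {n : ℕ} {Y : Fin (n + 1) → Ω → ℝ}
  {Q : Measure ℝ}

lemma measurable_rankAbove (v : Fin (n + 1)) :
    Measurable fun w : Fin (n + 1) → ℝ => rankAbove w v := by
  simp only [rankAbove, card_filter]
  exact Finset.measurable_sum _ fun u _ => Measurable.ite
    (measurableSet_lt (measurable_pi_apply v) (measurable_pi_apply u)) measurable_const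
    measurable_const

lemma ae_injective_of_iIndepFun (hY : ∀ v, Measurable (Y v)) (hind : iIndepFun Y μ)
    (hlaw : ∀ v, μ.map (Y v) = Q) [NullSingletonClass Q] :
    ∀ᵐ ω ∂μ, Function.Injective fun v => Y v ω := by
  have := hind.isProbabilityMeasure
  have hpair : ∀ u v, ∀ᵐ ω ∂μ, Y u ω = Y v ω → u = v := by
    intro u v
    by_cases huv : u = v
    · exact Filter.Eventually.of_forall fun _ _ => huv
    have : NullSingletonClass (μ.map (Y v)) := hlaw v ▸ inferInstance
    filter_upwards [measure_eq_zero_iff_ae_notMem.1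
      ((hind.indepFun huv).measure_eq_eq_zero (hY u) (hY v))] with ω hω h
    exact absurd h hω
  filter_upwards [ae_all_iff.2 fun u => ae_all_iff.2 (hpair u)] with ω hω u v
  exact hω u v

lemma measure_rankAbove_eq (hY : ∀ v, Measurable (Y v)) (hind : iIndepFun Y μ)
    (hlaw : ∀ v, μ.map (Y v) = Q) [NullSingletonClass Q] {r : ℕ} (hr : r ≤ n) :
    μ {ω | rankAbove (fun v => Y v ω) 0 = r} = ((n : ℝ≥0∞) + 1)⁻¹ := by
  have := hind.isProbabilityMeasure
  set A : Fin (n + 1) → Set Ω := fun v => {ω | rankAbove (fun v => Y v ω) v = r}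
  have hA : ∀ v, MeasurableSet (A v) := fun v =>
    ((measurable_rankAbove v).comp (measurable_pi_lambda _ hY)) (measurableSet_singleton r)
  have hexch : ∀ v, μ (A v) = μ (A 0) := by
    intro v
    have hσ : ∀ j, μ.map (Y (Equiv.swap 0 v j)) = μ.map (Y j) := fun j => by rw [hlaw, hlaw]
    have := ((hind.identDistrib_comp_equiv (fun j => (hY j).aemeasurable) _ hσ).comp
      (measurable_rankAbove 0)).measure_mem_eq (measurableSet_singleton r)
    have hrank : ∀ ω,
        rankAbove (fun j => Y (Equiv.swap 0 v j) ω) 0 = rankAbove (fun j => Y j ω) v :=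
      fun ω => (rankAbove_comp_equiv (fun j => Y j ω) _ 0).trans (by rw [Equiv.swap_apply_left])
    simpa only [Set.preimage, Function.comp_apply, Set.mem_singleton_iff, hrank] using this
  have hsum : ∑ v, μ (A v) = 1 := by
    calc ∑ v, μ (A v) = ∑ v, ∫⁻ ω, (A v).indicator 1 ω ∂μ := by
          simp only [lintegral_indicator_one (hA _)]
      _ = ∫⁻ ω, ∑ v, (A v).indicator 1 ω ∂μ :=
          (lintegral_finsetSum _ fun v _ => measurable_one.indicator (hA v)).symm
      _ = ∫⁻ _, 1 ∂μ := by
          refine lintegral_congr_ae ?_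
          filter_upwards [ae_injective_of_iIndepFun hY hind hlaw] with ω hω
          simp [Set.indicator_apply, A, sum_boole,
            card_rankAbove_eq hω (by simpa using Nat.lt_succ_of_le hr)]
      _ = 1 := by simp
  have hmul : μ (A 0) * ((n : ℝ≥0∞) + 1) = ∑ v, μ (A v) := by
    rw [sum_congr rfl fun v _ => hexch v, sum_const, card_univ, Fintype.card_fin, nsmul_eq_mul,
      mul_comm]
    push_cast
    rfl
  exact ENNReal.eq_inv_of_mul_eq_one_left (hmul.trans hsum)

lemma measure_card_le_succ_le (hY : ∀ v, Measurable (Y v)) (hind : iIndepFun Y μ)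
    (hlaw : ∀ v, μ.map (Y v) = Q) [NullSingletonClass Q] {s : ℕ} (hs : s ≤ n) :
    μ {ω | (univ.filter fun u : Fin n => Y 0 ω ≤ Y u.succ ω).card ≤ s}
      = ((s : ℝ≥0∞) + 1) / ((n : ℝ≥0∞) + 1) := by
  have hrank : Measurable fun ω => rankAbove (fun v => Y v ω) 0 :=
    (measurable_rankAbove 0).comp (measurable_pi_lambda _ hY)
  have hcongr : {ω | (univ.filter fun u : Fin n => Y 0 ω ≤ Y u.succ ω).card ≤ s}
      =ᵐ[μ] (fun ω => rankAbove (fun v => Y v ω) 0) ⁻¹' ↑(range (s + 1)) := by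
    filter_upwards [ae_injective_of_iIndepFun hY hind hlaw] with ω hω
    change (_ ≤ s) = (rankAbove (fun v => Y v ω) 0 ∈ (range (s + 1) : Set ℕ))
    rw [card_le_succ_eq_rankAbove hω]
    simp
  rw [measure_congr hcongr, ← sum_measure_preimage_singleton _ fun r _ =>
      hrank (measurableSet_singleton r)]
  calc _ = ∑ _r ∈ range (s + 1), ((n : ℝ≥0∞) + 1)⁻¹ :=
        sum_congr rfl fun r hr => measure_rankAbove_eq hY hind hlaw (by simp at hr; omega)
    _ = _ := by
        rw [sum_const, card_range, nsmul_eq_mul, div_eq_mul_inv]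
        push_cast
        rfl

end RankLaw

section EmpiricalPValue

variable {𝒳 : Type*} {n : ℕ} {a : 𝒳 → ℝ}

lemma empPval_eq_card_div (x : 𝒳) (z : Fin n → 𝒳) :
    empPval n a x z = (univ.filter fun u => a x ≤ a (z u)).card / n := by
  rw [empPval, sum_boole, one_div_mul_eq_div]

lemma empPval_nonneg (x : 𝒳) (z : Fin n → 𝒳) : 0 ≤ empPval n a x z := by
  rw [empPval_eq_card_div]
  positivity

lemma empPval_le_iff {x : 𝒳} {z : Fin n → 𝒳} {t : ℝ} (ht : 0 ≤ t) :
    empPval n a x z ≤ t ↔ (univ.filter fun u => a x ≤ a (z u)).card ≤ ⌊t * n⌋₊ := by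
  rw [empPval_eq_card_div]
  rcases n.eq_zero_or_pos with rfl | hn
  · simp [ht]
  · rw [div_le_iff₀ (by positivity), Nat.le_floor_iff (by positivity)]

lemma measure_empPval_le [MeasurableSpace 𝒳] (P0 : Measure 𝒳) [IsProbabilityMeasure P0]
    (ha : Measurable a)
    (hatomless : ∀ r : ℝ, P0 {x | a x = r} = 0) {t : ℝ} (ht0 : 0 ≤ t) (ht1 : t ≤ 1) :
    (Measure.pi fun _ : Fin (n + 1) => P0) {w | empPval n a (w 0) (fun u => w u.succ) ≤ t}
      = ((⌊t * n⌋₊ : ℝ≥0∞) + 1) / ((n : ℝ≥0∞) + 1) := by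
  have : NullSingletonClass (P0.map a) :=
    ⟨fun r => by rw [Measure.map_apply ha (measurableSet_singleton r)]; exact hatomless r⟩
  simp only [empPval_le_iff ht0]
  refine measure_card_le_succ_le (Y := fun v (w : Fin (n + 1) → 𝒳) => a (w v)) (Q := P0.map a)
    (fun v => ha.comp (measurable_pi_apply v))
    (iIndepFun_pi fun _ => ha.aemeasurable) (fun v => ?_)
    (Nat.floor_le_of_le (mul_le_of_le_one_left n.cast_nonneg ht1))
  rw [show (fun w : Fin (n + 1) → 𝒳 => a (w v)) = a ∘ Function.eval v from rfl,
    ← Measure.map_map ha (measurable_pi_apply v), (measurePreserving_eval (fun _ => P0) v).map_eq]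

lemma measurable_empPval_cons [MeasurableSpace 𝒳] (ha : Measurable a) :
    Measurable fun w : Fin (n + 1) → 𝒳 => empPval n a (w 0) (fun u => w u.succ) := by
  simp only [empPval]
  exact (Finset.measurable_sum _ fun u _ => Measurable.ite (measurableSet_le
    (ha.comp (measurable_pi_apply 0)) (ha.comp (measurable_pi_apply u.succ))) measurable_const
    measurable_const).const_mul _

end EmpiricalPValue

namespace BH

variable {m : ℕ} {α : ℝ}

noncomputable def bhCount (m : ℕ) (α : ℝ) (p : Fin m → ℝ) (k : ℕ) : ℕ :=
  (univ.filter fun j => p j ≤ α * (k : ℝ) / m).card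

/-- The BH step-up index; it is `0` when BH rejects nothing. -/
noncomputable def bhIndex (m : ℕ) (α : ℝ) (p : Fin m → ℝ) : ℕ :=
  Nat.findGreatest (fun k => k ≤ bhCount m α p k) m

lemma bhCount_mono (hα : 0 ≤ α) (p : Fin m → ℝ) : Monotone (bhCount m α p) :=
  fun _ _ hkk' => card_le_card fun j hj => by
    simp only [mem_filter] at hj ⊢
    exact ⟨hj.1, hj.2.trans (by gcongr)⟩

lemma bhCount_le (p : Fin m → ℝ) (k : ℕ) : bhCount m α p k ≤ m :=
  (card_filter_le _ _).trans_eq (card_fin m)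

lemma bhIndex_le_bhCount (p : Fin m → ℝ) : bhIndex m α p ≤ bhCount m α p (bhIndex m α p) :=
  Nat.findGreatest_spec (P := fun k => k ≤ bhCount m α p k) (Nat.zero_le m) (Nat.zero_le _)

lemma bhRejects_iff (hα : 0 ≤ α) (p : Fin m → ℝ) (i : Fin m) :
    bhRejects m α p i ↔ 0 < bhIndex m α p ∧ p i ≤ α * bhIndex m α p / m := by
  constructor
  · rintro ⟨k, hk, hpk, hcount⟩
    have hk' := mem_Icc.1 hk
    have hkK : k ≤ bhIndex m α p := Nat.le_findGreatest hk'.2 hcount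
    exact ⟨hk'.1.trans hkK, hpk.trans (by gcongr)⟩
  · rintro ⟨hpos, hpi⟩
    exact ⟨_, mem_Icc.2 ⟨hpos, Nat.findGreatest_le m⟩, hpi, bhIndex_le_bhCount p⟩

lemma bhR_eq_bhIndex (hα : 0 ≤ α) (p : Fin m → ℝ) : bhR m α p = bhIndex m α p := by
  set K := bhIndex m α p
  rcases K.eq_zero_or_pos with hK | hK
  · rw [hK, bhR, card_eq_zero, filter_eq_empty_iff]
    exact fun j _ hj => ((bhRejects_iff hα p j).1 hj).1.ne' hK
  have hR : bhR m α p = bhCount m α p K := by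
    simp only [bhR, bhCount, bhRejects_iff hα, hK, true_and, K]
  rw [hR]
  refine le_antisymm ?_ (bhIndex_le_bhCount p)
  by_contra! hlt
  have : K + 1 ≤ K := Nat.le_findGreatest (hlt.trans_le (bhCount_le p K))
    (hlt.trans_le (bhCount_mono hα p K.le_succ))
  omega

lemma bhCount_comp_perm (σ : Equiv.Perm (Fin m)) (p : Fin m → ℝ) (k : ℕ) :
    bhCount m α (p ∘ σ) k = bhCount m α p k := by
  simp only [bhCount, card_filter, Function.comp_apply]
  exact Equiv.sum_comp σ fun j => if p j ≤ α * k / m then 1 else 0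

lemma bhR_comp_perm (hα : 0 ≤ α) (σ : Equiv.Perm (Fin m)) (p : Fin m → ℝ) :
    bhR m α (p ∘ σ) = bhR m α p := by
  simp only [bhR_eq_bhIndex hα, bhIndex, bhCount_comp_perm]

lemma measurable_bhCount (k : ℕ) : Measurable fun p : Fin m → ℝ => bhCount m α p k := by
  simp only [bhCount, card_filter]
  exact Finset.measurable_sum _ fun j _ =>
    Measurable.ite (measurableSet_le (measurable_pi_apply j) measurable_const)
      measurable_const measurable_const

lemma measurable_bhR (hα : 0 ≤ α) : Measurable (bhR m α) := by
  simp only [funext (bhR_eq_bhIndex (m := m) hα)]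
  exact measurable_findGreatest fun k _ =>
    measurableSet_le measurable_const (measurable_bhCount k)

section Zeroing

variable {p : Fin m → ℝ} {i : Fin m}

lemma bhCount_le_update_zero (hpi : 0 ≤ p i) (k : ℕ) :
    bhCount m α p k ≤ bhCount m α (Function.update p i 0) k := by
  refine card_le_card fun j hj => ?_
  simp only [mem_filter] at hj ⊢
  rcases eq_or_ne j i with rfl | hji
  · simpa using hpi.trans hj.2
  · simpa [hji] using hj.2

lemma bhCount_update_zero_of_le (hpi : 0 ≤ p i) {k : ℕ} (hk : p i ≤ α * k / m) :
    bhCount m α (Function.update p i 0) k = bhCount m α p k := by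
  simp only [bhCount]
  congr 1
  refine filter_congr fun j _ => ?_
  rcases eq_or_ne j i with rfl | hji
  · simpa using ⟨fun _ => hk, fun _ => hpi.trans hk⟩
  · simp [hji]

lemma one_le_bhIndex_update_zero (hα : 0 ≤ α) :
    1 ≤ bhIndex m α (Function.update p i 0) := by
  refine Nat.le_findGreatest i.pos ?_
  refine card_pos.2 ⟨i, ?_⟩
  simp only [mem_filter, mem_univ, Function.update_self, true_and]
  positivity

lemma bhIndex_le_update_zero (hpi : 0 ≤ p i) :
    bhIndex m α p ≤ bhIndex m α (Function.update p i 0) :=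
  Nat.findGreatest_mono_left (fun k (hk : k ≤ bhCount m α p k) =>
    hk.trans (bhCount_le_update_zero hpi k)) m

lemma bhIndex_eq_update_zero_of_le (hpi : 0 ≤ p i)
    (h : p i ≤ α * bhIndex m α (Function.update p i 0) / m) :
    bhIndex m α p = bhIndex m α (Function.update p i 0) := by
  refine le_antisymm (bhIndex_le_update_zero hpi) (Nat.le_findGreatest (Nat.findGreatest_le m) ?_)
  rw [← bhCount_update_zero_of_le hpi h]
  exact bhIndex_le_bhCount _

lemma bhRejects_iff_le_update_zero (hα : 0 ≤ α) (hpi : 0 ≤ p i) :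
    bhRejects m α p i ↔ p i ≤ α * bhR m α (Function.update p i 0) / m := by
  rw [bhRejects_iff hα, bhR_eq_bhIndex hα]
  constructor
  · rintro ⟨-, h⟩
    exact h.trans (by gcongr; exact bhIndex_le_update_zero hpi)
  · intro h
    rw [bhIndex_eq_update_zero_of_le hpi h]
    exact ⟨one_le_bhIndex_update_zero hα, h⟩

lemma bhR_eq_update_zero_of_bhRejects (hα : 0 ≤ α) (hpi : 0 ≤ p i) (h : bhRejects m α p i) :
    bhR m α p = bhR m α (Function.update p i 0) := by
  have hle := (bhRejects_iff_le_update_zero hα hpi).1 h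
  rw [bhR_eq_bhIndex hα] at hle ⊢
  rw [bhR_eq_bhIndex hα]
  exact bhIndex_eq_update_zero_of_le hpi hle

lemma bhR_update_zero_mem_Icc (hα : 0 ≤ α) :
    bhR m α (Function.update p i 0) ∈ Icc 1 m := by
  rw [bhR_eq_bhIndex hα]
  exact mem_Icc.2 ⟨one_le_bhIndex_update_zero hα, Nat.findGreatest_le m⟩

end Zeroing

lemma bhFDP_eq_sum (hα : 0 ≤ α) (H0 : Finset (Fin m)) {p : Fin m → ℝ} (hp : ∀ j, 0 ≤ p j) :
    bhFDP m α H0 p = ∑ i ∈ H0, ∑ k ∈ Icc 1 m,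
      if bhR m α (Function.update p i 0) = k ∧ p i ≤ α * k / m then (k : ℝ)⁻¹ else 0 := by
  rw [bhFDP, bhFP, card_filter, Nat.cast_sum, sum_div]
  refine sum_congr rfl fun i _ => ?_
  simp only [ite_and, sum_ite_eq, bhR_update_zero_mem_Icc hα, if_true]
  by_cases h : bhRejects m α p i
  · rw [if_pos h, if_pos ((bhRejects_iff_le_update_zero hα (hp i)).1 h),
      bhR_eq_update_zero_of_bhRejects hα (hp i) h, Nat.cast_one, one_div]
  · rw [if_neg h, if_neg (mt (bhRejects_iff_le_update_zero hα (hp i)).2 h), Nat.cast_zero,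
      zero_div]

variable {Ω : Type*} [MeasurableSpace Ω] {μ : Measure Ω} {P : Fin m → Ω → ℝ}

lemma measurable_bhR_update_zero (hα : 0 ≤ α) (i : Fin m) :
    Measurable fun p : Fin m → ℝ => bhR m α (Function.update p i 0) :=
  (measurable_bhR hα).comp (by fun_prop)

lemma measure_bhR_update_zero_eq (hα : 0 ≤ α) (hP : ∀ j, Measurable (P j))
    (hind : iIndepFun P μ) {i i' : Fin m} (hlaw : μ.map (P i) = μ.map (P i')) (k : ℕ) :
    μ {ω | bhR m α (Function.update (fun j => P j ω) i 0) = k}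
      = μ {ω | bhR m α (Function.update (fun j => P j ω) i' 0) = k} := by
  set σ := Equiv.swap i i'
  have hσ : ∀ j, μ.map (P (σ j)) = μ.map (P j) := by
    intro j
    rcases eq_or_ne j i with rfl | hji
    · simp [σ, hlaw]
    rcases eq_or_ne j i' with rfl | hji'
    · simp [σ, hlaw]
    · rw [Equiv.swap_apply_of_ne_of_ne hji hji']
  have hswap : ∀ ω, bhR m α (Function.update (fun j => P j ω) i 0)
      = bhR m α (Function.update (fun j => P (σ j) ω) i' 0) := by
    intro ω
    rw [← bhR_comp_perm hα σ, Function.update_comp_equiv]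
    simp [σ, Function.comp_def]
  simp only [hswap]
  exact ((hind.identDistrib_comp_equiv (fun j => (hP j).aemeasurable) σ hσ).comp
    (measurable_bhR_update_zero hα i')).measure_mem_eq (measurableSet_singleton k)

theorem integral_bhFDP_eq_of_iIndepFun (hα : 0 ≤ α)
    (hP : ∀ j, Measurable (P j)) (hind : iIndepFun P μ) (hP_nonneg : ∀ j ω, 0 ≤ P j ω)
    {H0 : Finset (Fin m)} {G : Measure ℝ} (hnull : ∀ i ∈ H0, μ.map (P i) = G)
    {i : Fin m} (hi : i ∈ H0) :
    ∫ ω, bhFDP m α H0 (fun j => P j ω) ∂μ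
      = H0.card * ∑ k ∈ Icc 1 m, G.real (Set.Iic (α * k / m)) / k
          * μ.real {ω | bhR m α (Function.update (fun j => P j ω) i 0) = k} := by
  have := hind.isProbabilityMeasure
  set R : Fin m → Ω → ℕ := fun i' ω => bhR m α (Function.update (fun j => P j ω) i' 0)
  have hR : ∀ i', Measurable (R i') := fun i' =>
    (measurable_bhR_update_zero hα i').comp (measurable_pi_lambda _ hP)
  set A : Fin m → ℕ → Set Ω := fun i' k => {ω | R i' ω = k} ∩ {ω | P i' ω ≤ α * k / m}
  have hA : ∀ i' k, MeasurableSet (A i' k) := fun i' k =>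
    (hR i' (measurableSet_singleton k)).inter (hP i' measurableSet_Iic)
  have hterm : ∀ i' ∈ H0, ∀ k : ℕ,
      μ.real (A i' k) = G.real (Set.Iic (α * k / m)) * μ.real {ω | R i ω = k} := by
    intro i' hi' k
    have hindep : IndepFun (R i') (P i') μ :=
      ((hind.indepFun_update_s3 hP i' 0).comp measurable_id (measurable_bhR hα)).symm
    have hexch : μ.real (R i' ⁻¹' {k}) = μ.real {ω | R i ω = k} :=
      congrArg ENNReal.toReal <|
        measure_bhR_update_zero_eq hα hP hind ((hnull i' hi').trans (hnull i hi).symm) k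
    change μ.real (R i' ⁻¹' {k} ∩ P i' ⁻¹' Set.Iic (α * k / m)) = _
    rw [measureReal_def, hindep.measure_inter_preimage_eq_mul _ _ (measurableSet_singleton k)
      measurableSet_Iic, ENNReal.toReal_mul, mul_comm, ← measureReal_def, ← measureReal_def,
      ← hnull i' hi', map_measureReal_apply (hP i') measurableSet_Iic, hexch]
  calc ∫ ω, bhFDP m α H0 (fun j => P j ω) ∂μ
      = ∫ ω, ∑ i' ∈ H0, ∑ k ∈ Icc 1 m, (A i' k).indicator (fun _ => (k : ℝ)⁻¹) ω ∂μ := by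
        congr with ω
        rw [bhFDP_eq_sum hα H0 fun j => hP_nonneg j ω]
        simp only [Set.indicator_apply]
        rfl
    _ = ∑ i' ∈ H0, ∑ k ∈ Icc 1 m, μ.real (A i' k) * (k : ℝ)⁻¹ := by
        rw [integral_finsetSum _ fun i' _ => integrable_finsetSum _ fun k _ =>
          (integrable_const _).indicator (hA i' k)]
        refine sum_congr rfl fun i' _ => ?_
        rw [integral_finsetSum _ fun k _ => (integrable_const _).indicator (hA i' k)]
        simp only [integral_indicator_const _ (hA i' _), smul_eq_mul]
    _ = _ := by
        rw [← nsmul_eq_mul, ← sum_const]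
        refine sum_congr rfl fun i' hi' => sum_congr rfl fun k _ => ?_
        rw [hterm i' hi' k]
        ring

end BH

section Calibration

variable {Ω 𝒳 : Type*} [MeasurableSpace Ω] [MeasurableSpace 𝒳] {μ : Measure Ω} {m n : ℕ}
  {X : Fin m → Ω → 𝒳} {Z : Fin m → Fin n → Ω → 𝒳}

lemma measurable_cons (hX : ∀ j, Measurable (X j)) (hZ : ∀ j u, Measurable (Z j u)) (j : Fin m)
    (v : Fin (n + 1)) :
    Measurable fun ω => (Fin.cons (X j ω) (fun u => Z j u ω) : Fin (n + 1) → 𝒳) v := by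
  cases v using Fin.cases
  exacts [hX j, hZ j _]

lemma iIndepFun_sigma_cons
    (h : iIndepFun (Sum.elim X (fun q : Fin m × Fin n => Z q.1 q.2)) μ) :
    iIndepFun (fun (p : (_ : Fin m) × Fin (n + 1)) ω =>
      (Fin.cons (X p.1 ω) (fun u => Z p.1 u ω) : Fin (n + 1) → 𝒳) p.2) μ := by
  let e : (_ : Fin m) × Fin (n + 1) → Fin m ⊕ (Fin m × Fin n) :=
    fun p => Fin.cases (Sum.inl p.1) (fun u => Sum.inr (p.1, u)) p.2
  have he : e.Injective := by
    rintro ⟨j, v⟩ ⟨j', v'⟩ hjj'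
    cases v using Fin.cases <;> cases v' using Fin.cases <;> simp_all [e]
  convert h.precomp he using 1
  ext ⟨j, v⟩ ω
  cases v using Fin.cases <;> rfl

lemma measurable_empPval (hX : ∀ j, Measurable (X j)) (hZ : ∀ j u, Measurable (Z j u))
    {a : 𝒳 → ℝ} (ha : Measurable a) (j : Fin m) :
    Measurable fun ω => empPval n a (X j ω) (fun u => Z j u ω) :=
  (measurable_empPval_cons ha).comp (measurable_pi_lambda _ (measurable_cons hX hZ j))

variable (hX : ∀ j, Measurable (X j)) (hZ : ∀ j u, Measurable (Z j u))
  (h : iIndepFun (Sum.elim X (fun q : Fin m × Fin n => Z q.1 q.2)) μ)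
include hX hZ h

lemma iIndepFun_empPval {a : 𝒳 → ℝ} (ha : Measurable a) :
    iIndepFun (fun j ω => empPval n a (X j ω) (fun u => Z j u ω)) μ :=
  ((iIndepFun_sigma_cons h).curry (measurable_cons hX hZ)).comp _ fun _ =>
    measurable_empPval_cons ha

lemma map_empPval_eq {P0 : Measure 𝒳} {a : 𝒳 → ℝ} (ha : Measurable a) {j : Fin m}
    (hXj : μ.map (X j) = P0) (hZj : ∀ u, μ.map (Z j u) = P0) :
    μ.map (fun ω => empPval n a (X j ω) (fun u => Z j u ω))
      = (Measure.pi fun _ : Fin (n + 1) => P0).map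
          fun w => empPval n a (w 0) (fun u => w u.succ) := by
  have hcons : μ.map (fun ω => (Fin.cons (X j ω) (fun u => Z j u ω) : Fin (n + 1) → 𝒳))
      = Measure.pi fun _ => P0 := by
    rw [((iIndepFun_sigma_cons h).precomp sigma_mk_injective).map_fun_eq_pi_map
      fun v => (measurable_cons hX hZ j v).aemeasurable]
    congr with v : 1
    cases v using Fin.cases
    exacts [hXj, hZj _]
  rw [← hcons, Measure.map_map (measurable_empPval_cons ha)
    (measurable_pi_lambda _ (measurable_cons hX hZ j))]
  rfl

end Calibration

theorem fdr_bh_empirical_pvalues_general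
    {Ω 𝒳 : Type*} [MeasurableSpace Ω] [MeasurableSpace 𝒳]
    (μ : Measure Ω)
    (P0 : Measure 𝒳) [IsProbabilityMeasure P0]
    (m n m0 : ℕ)
    (H0 : Finset (Fin m)) (hcard : H0.card = m0)
    (a : 𝒳 → ℝ) (ha : Measurable a)
    (X : Fin m → Ω → 𝒳) (Z : Fin m → Fin n → Ω → 𝒳)
    (hXmeas : ∀ i, Measurable (X i)) (hZmeas : ∀ i j, Measurable (Z i j))
    (hindep : iIndepFun
      (Sum.elim X (fun q : Fin m × Fin n => Z q.1 q.2) : Fin m ⊕ (Fin m × Fin n) → Ω → 𝒳) μ)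
    (hXlaw : ∀ i ∈ H0, μ.map (X i) = P0)
    (hZlaw : ∀ i j, μ.map (Z i j) = P0)
    (hatomless : ∀ r : ℝ, P0 {x | a x = r} = 0)
    (α : ℝ) (hα : α ∈ Set.Ioc (0 : ℝ) 1) :
    ∀ i ∈ H0,
      ∫ ω, bhFDP m α H0 (fun j => empPval n a (X j ω) (fun u => Z j u ω)) ∂μ
        = m0 * ∑ k ∈ Finset.Icc 1 m,
            (((⌊α * k * n / m⌋ : ℝ) + 1) / ((n + 1) * k))
              * (μ {ω | bhR m α
                  (Function.update (fun j => empPval n a (X j ω) (fun u => Z j u ω)) i 0)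
                    = k}).toReal := by
  intro i hi
  obtain ⟨hα0, hα1⟩ := hα
  rw [BH.integral_bhFDP_eq_of_iIndepFun hα0.le (measurable_empPval hXmeas hZmeas ha)
    (iIndepFun_empPval hXmeas hZmeas hindep ha) (fun _ _ => empPval_nonneg _ _)
    (fun j hj => map_empPval_eq hXmeas hZmeas hindep ha (hXlaw j hj) (hZlaw j)) hi, hcard]
  congr 1
  refine sum_congr rfl fun k hk => ?_
  have hk : (1 : ℝ) ≤ k ∧ (k : ℝ) ≤ m := by exact_mod_cast mem_Icc.1 hk
  have hfloor : (⌊α * k / m * n⌋₊ : ℝ) = ⌊α * k * n / m⌋ := by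
    rw [div_mul_eq_mul_div]
    exact natCast_floor_eq_intCast_floor (by positivity)
  rw [map_measureReal_apply (measurable_empPval_cons ha) measurableSet_Iic, measureReal_def]
  simp only [Set.preimage, Set.mem_Iic]
  rw [measure_empPval_le P0 ha hatomless (by positivity)
      (div_le_one_of_le₀ (by nlinarith) (by positivity)), ← hfloor]
  simp [ENNReal.toReal_add, div_div, measureReal_def]

/-- FDR of BH applied to independent empirical p-values, each computed
from its own calibration set of `n` i.i.d. `P0` points; the FDR equals
`m0 * ∑ₖ (⌊α k n / m⌋ + 1)/((n+1) k) * P(R(i) = k)` for any null index `i`, where `R(i)` is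
the number of BH rejections when `p̂ᵢ` is replaced by `0`. -/
theorem fdr_bh_empirical_pvalues
    {Ω 𝒳 : Type*} [MeasurableSpace Ω] [MeasurableSpace 𝒳]
    (μ : Measure Ω) [IsProbabilityMeasure μ]
    (P0 : Measure 𝒳) [IsProbabilityMeasure P0]
    (m n m0 : ℕ) (hm : 0 < m) (hn : 0 < n)
    (H0 : Finset (Fin m)) (hcard : H0.card = m0)
    (a : 𝒳 → ℝ) (ha : Measurable a)
    (X : Fin m → Ω → 𝒳) (Z : Fin m → Fin n → Ω → 𝒳)
    (hXmeas : ∀ i, Measurable (X i)) (hZmeas : ∀ i j, Measurable (Z i j))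
    (hindep : iIndepFun
      (Sum.elim X (fun q : Fin m × Fin n => Z q.1 q.2) : Fin m ⊕ (Fin m × Fin n) → Ω → 𝒳) μ)
    (hXlaw : ∀ i ∈ H0, μ.map (X i) = P0)
    (hZlaw : ∀ i j, μ.map (Z i j) = P0)
    (hatomless : ∀ r : ℝ, P0 {x | a x = r} = 0)
    (α : ℝ) (hα : α ∈ Set.Ioc (0 : ℝ) 1) :
    ∀ i ∈ H0,
      ∫ ω, bhFDP m α H0 (fun j => empPval n a (X j ω) (fun u => Z j u ω)) ∂μ
        = m0 * ∑ k ∈ Finset.Icc 1 m,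
            (((⌊α * k * n / m⌋ : ℝ) + 1) / ((n + 1) * k))
              * (μ {ω | bhR m α
                  (Function.update (fun j => empPval n a (X j ω) (fun u => Z j u ω)) i 0)
                    = k}).toReal :=
  fdr_bh_empirical_pvalues_general μ P0 m n m0 H0 hcard a ha X Z hXmeas hZmeas hindep hXlaw hZlaw
    hatomless α hα
end

section
/- Let α ∈ (0,1] and let ℓ, m, k be positive integers with k ≤ m, and set n = ⌈ℓm/α⌉ − 1. Then ⌊αkn/m⌋ = kℓ − 1, and the fractional part of αkn/m satisfies 1 − αk/m ≤ frac(αkn/m) < 1 when αk/m < 1 (and frac(αkn/m) ≥ 0 = 1 − αk/m when αk/m = 1). -/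
/-! With `c = ⌈ℓ m / α⌉`, `n = c - 1` is the last integer with `α n < ℓ m`, so
`ℓ m - α ≤ α n < ℓ m`. Scaling by `k / m` puts `α k n / m` in `[k ℓ - α k / m, k ℓ)`,
a window of length `α k / m ≤ 1` just below the integer `k ℓ`. -/

open Set

theorem mul_ceil_div_sub_one_mem_Ico {a : ℝ} (ha : 0 < a) (y : ℝ) :
    a * ((⌈y / a⌉ : ℝ) - 1) ∈ Ico (y - a) y := by
  have hle : y ≤ a * ⌈y / a⌉ := (div_le_iff₀' ha).1 (Int.le_ceil _)
  have hlt : a * ((⌈y / a⌉ : ℝ) - 1) < y :=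
    (lt_div_iff₀' ha).1 (by linarith [Int.ceil_lt_add_one (y / a)])
  exact ⟨by linarith, hlt⟩

section WindowBelowInteger

variable {x δ : ℝ} {N : ℤ}

theorem floor_eq_sub_one_of_mem_Ico_sub (hδ : δ ≤ 1) (hx : x ∈ Ico (N - δ) N) :
    ⌊x⌋ = N - 1 := by
  rw [Int.floor_eq_iff]
  push_cast
  exact ⟨by linarith [hx.1], by linarith [hx.2]⟩

theorem one_sub_le_fract_of_mem_Ico_sub (hδ : δ ≤ 1) (hx : x ∈ Ico (N - δ) N) :
    1 - δ ≤ Int.fract x := by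
  rw [Int.fract, floor_eq_sub_one_of_mem_Ico_sub hδ hx]
  push_cast
  linarith [hx.1]

end WindowBelowInteger

theorem frac_part_calibration_general_general
    (α : ℝ) (hα : α ∈ Set.Ioc (0 : ℝ) 1)
    (ℓ m k : ℕ) (hk : 0 < k) (hkm : k ≤ m)
    (n : ℝ) (hn : n = (⌈(ℓ : ℝ) * m / α⌉ : ℝ) - 1) :
    ⌊α * k * n / m⌋ = (k : ℤ) * ℓ - 1
    ∧ (α * k / m < 1 →
        1 - α * k / m ≤ Int.fract (α * k * n / m) ∧ Int.fract (α * k * n / m) < 1)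
    ∧ (α * k / m = 1 → 1 - α * k / m ≤ Int.fract (α * k * n / m)) := by
  obtain ⟨hα0, hα1⟩ := hα
  have hk' : (0 : ℝ) < k := by exact_mod_cast hk
  have hm : (0 : ℝ) < m := by exact_mod_cast hk.trans_le hkm
  have hδ : α * k / m ≤ 1 :=
    (div_le_one hm).2 (mul_le_of_le_one_left hk'.le hα1 |>.trans (by exact_mod_cast hkm))
  have hx : α * k * n / m ∈ Ico (((k * ℓ : ℤ) : ℝ) - α * k / m) ((k * ℓ : ℤ) : ℝ) := by
    obtain ⟨hlo, hhi⟩ := hn ▸ mul_ceil_div_sub_one_mem_Ico hα0 (ℓ * m)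
    have hscale : 0 < (k : ℝ) / m := div_pos hk' hm
    have hlo' := mul_le_mul_of_nonneg_left hlo hscale.le
    have hhi' := mul_lt_mul_of_pos_left hhi hscale
    push_cast
    constructor
    · calc (k : ℝ) * ℓ - α * k / m = k / m * (ℓ * m - α) := by field_simp
        _ ≤ k / m * (α * n) := hlo'
        _ = α * k * n / m := by ring
    · calc α * k * n / m = k / m * (α * n) := by ring
        _ < k / m * (ℓ * m) := hhi'
        _ = k * ℓ := by field_simp
  have hfract := one_sub_le_fract_of_mem_Ico_sub hδ hx
  exact ⟨floor_eq_sub_one_of_mem_Ico_sub hδ hx, fun _ => ⟨hfract, Int.fract_lt_one _⟩,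
    fun _ => hfract⟩

/-- for `α ∈ (0,1]`, positive integers `ℓ, m, k` with `k ≤ m`, and
`n = ⌈ℓ m / α⌉ - 1`, one has `⌊α k n / m⌋ = k ℓ - 1`, and the fractional part of
`α k n / m` satisfies `1 - α k / m ≤ frac(α k n / m) < 1` when `α k / m < 1`
(and `frac(α k n / m) ≥ 0 = 1 - α k / m` when `α k / m = 1`). -/
theorem frac_part_calibration_general
    (α : ℝ) (hα : α ∈ Set.Ioc (0 : ℝ) 1)
    (ℓ m k : ℕ) (hℓ : 0 < ℓ) (hm : 0 < m) (hk : 0 < k) (hkm : k ≤ m)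
    (n : ℝ) (hn : n = (⌈(ℓ : ℝ) * m / α⌉ : ℝ) - 1) :
    ⌊α * k * n / m⌋ = (k : ℤ) * ℓ - 1
    ∧ (α * k / m < 1 →
        1 - α * k / m ≤ Int.fract (α * k * n / m) ∧ Int.fract (α * k * n / m) < 1)
    ∧ (α * k / m = 1 → 1 - α * k / m ≤ Int.fract (α * k * n / m)) :=
  frac_part_calibration_general_general α hα ℓ m k hk hkm n hn
end

section
/- In the setting of empirical p-values with overlapping calibration sets (Z a vector of i.i.d. P0 calibration points, D_i ⊂ indices of size n, p̂_i the empirical p-value of X_i computed from Z_{D_i}, X_1,…,X_m independent and independent of Z, the null test points distributed as P0, atomless score distribution), if there exists an integer ℓ ≥ 1 such that n = ℓm/α − 1 with ℓm/α an integer, then the FDR of the BH procedure at level α applied to (p̂_1,…,p̂_m) satisfies FDR ≤ m0·α/m, where m0 is the number of null indices. -/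
open MeasureTheory ProbabilityTheory Finset
open scoped Classical ENNReal

/-!
Write the FDP as the sum over null hypotheses `i` of `1[i rejected] / R`. Fix a null `i`. The
scores of `X i` and of its `n` calibration points `Z_{D i}` are i.i.d. and independent of all
other scores, so permuting them leaves the expectation of `i`'s contribution unchanged; that
expectation is therefore the average over the `(n + 1)!` permutations of the block.

Fix the relative order of the calibration scores and let `X i` take the `s`-th largest value of
the block (counting from `0`). As `s` grows, every p-value grows, so the number `R_s` of
rejections decreases, while `p_i ≥ s / n`. If `i` is rejected, BH self-consistency
`p_i ≤ α R_s / m` and `n + 1 = ℓ m / α` give `s + 1 ≤ ℓ R_s`; if `t` is the last rejected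
position, every rejected `s ≤ t` has `1 / R_s ≤ 1 / R_t ≤ ℓ / (t + 1)`, so the `n + 1` positions
contribute at most `ℓ` in total. Hence each null contributes at most `ℓ / (n + 1) = α / m` to the
FDR.
-/

noncomputable def bhFDPTerm (m : ℕ) (α : ℝ) (p : Fin m → ℝ) (i : Fin m) : ℝ :=
  if bhRejects m α p i then (bhR m α p : ℝ)⁻¹ else 0

section BenjaminiHochberg

variable {m : ℕ} {α : ℝ}

lemma bhRejects_of_le {p p' : Fin m → ℝ} (h : p ≤ p') {i : Fin m} (hi : bhRejects m α p' i) :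
    bhRejects m α p i := by
  obtain ⟨k, hk, hpk, hcard⟩ := hi
  refine ⟨k, hk, (h i).trans hpk, hcard.trans (card_le_card fun j hj => ?_)⟩
  simp only [mem_filter, mem_univ, true_and] at hj ⊢
  exact (h j).trans hj

lemma bhR_antitone : Antitone (bhR m α) := fun _ _ h =>
  card_le_card fun i hi => by
    simp only [mem_filter, mem_univ, true_and] at hi ⊢
    exact bhRejects_of_le h hi

lemma bhRejects.one_le_bhR_and_le (hα : 0 ≤ α) {p : Fin m → ℝ} {i : Fin m}
    (h : bhRejects m α p i) : 1 ≤ bhR m α p ∧ p i ≤ α * bhR m α p / m := by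
  obtain ⟨k, hk, hpk, hcard⟩ := h
  have hkR : k ≤ bhR m α p := hcard.trans <| card_le_card fun j hj => by
    simp only [mem_filter, mem_univ, true_and] at hj ⊢
    exact ⟨k, hk, hj, hcard⟩
  refine ⟨(mem_Icc.1 hk).1.trans hkR, hpk.trans ?_⟩
  gcongr

lemma bhFDP_eq_sum_bhFDPTerm (H0 : Finset (Fin m)) (p : Fin m → ℝ) :
    bhFDP m α H0 p = ∑ i ∈ H0, bhFDPTerm m α p i := by
  simp only [bhFDP, bhFP, bhFDPTerm, card_filter, div_eq_mul_inv, Nat.cast_sum, sum_mul]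
  refine sum_congr rfl fun i _ => ?_
  split_ifs <;> simp

lemma abs_bhFDPTerm_le_one (hα : 0 ≤ α) (p : Fin m → ℝ) (i : Fin m) :
    |bhFDPTerm m α p i| ≤ 1 := by
  unfold bhFDPTerm
  split_ifs with h
  · rw [abs_inv, Nat.abs_cast]
    exact inv_le_one_of_one_le₀ (by exact_mod_cast (h.one_le_bhR_and_le hα).1)
  · simp

lemma sum_ite_inv_le_of_antitone {N ℓ : ℕ} {r : Fin N → ℕ} (hr : Antitone r) :
    ∑ s : Fin N, (if (s : ℕ) + 1 ≤ ℓ * r s then (r s : ℝ)⁻¹ else 0) ≤ ℓ := by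
  rw [← sum_filter]
  set S := univ.filter fun s : Fin N => (s : ℕ) + 1 ≤ ℓ * r s
  rcases S.eq_empty_or_nonempty with hS | hS
  · simp [hS]
  -- the last index `t` of `S` has the smallest `r`, and `S` has at most `t + 1` elements
  set t := S.max' hS
  have ht : (t : ℕ) + 1 ≤ ℓ * r t := (mem_filter.1 (S.max'_mem hS)).2
  have hrt : (0 : ℝ) < r t := by
    have : r t ≠ 0 := by rintro h; simp [h] at ht
    positivity
  calc ∑ s ∈ S, (r s : ℝ)⁻¹ ≤ ∑ _s ∈ S, (r t : ℝ)⁻¹ :=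
        sum_le_sum fun s hs => inv_anti₀ hrt (by exact_mod_cast hr (S.le_max' s hs))
    _ = #S * (r t : ℝ)⁻¹ := by rw [sum_const, nsmul_eq_mul]
    _ ≤ ((t : ℕ) + 1) * (r t : ℝ)⁻¹ := by
        gcongr
        have := card_le_card (t := Iic t) fun s hs => Finset.mem_Iic.2 (S.le_max' s hs)
        rw [Fin.card_Iic] at this
        exact_mod_cast this
    _ ≤ ℓ := by
        rw [← div_eq_mul_inv, div_le_iff₀ hrt]
        exact_mod_cast ht

lemma sum_bhFDPTerm_le_of_monotone {n ℓ : ℕ} (hn : 0 < n) (hα : 0 < α)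
    (hℓ : (ℓ : ℝ) * m = α * (n + 1)) {P : Fin (n + 1) → Fin m → ℝ} (hP : Monotone P)
    {i : Fin m} (hPi : ∀ s : Fin (n + 1), ((s : ℕ) : ℝ) / n ≤ P s i) :
    ∑ s, bhFDPTerm m α (P s) i ≤ ℓ := by
  have hrej : ∀ s, bhRejects m α (P s) i → (s : ℕ) + 1 ≤ ℓ * bhR m α (P s) := by
    intro s hs
    obtain ⟨hR, hpi⟩ := hs.one_le_bhR_and_le hα.le
    have hm : (0 : ℝ) < m := by exact_mod_cast i.pos
    have hR' : (1 : ℝ) ≤ bhR m α (P s) := by exact_mod_cast hR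
    have hsR : ((s : ℕ) : ℝ) * m ≤ α * bhR m α (P s) * n := by
      rw [← div_le_div_iff₀ (by positivity) hm]
      exact (hPi s).trans hpi
    have : ((s : ℕ) : ℝ) < ℓ * bhR m α (P s) := by nlinarith
    exact_mod_cast this
  calc ∑ s, bhFDPTerm m α (P s) i
      ≤ ∑ s : Fin (n + 1),
          (if (s : ℕ) + 1 ≤ ℓ * bhR m α (P s) then (bhR m α (P s) : ℝ)⁻¹ else 0) := by
        refine sum_le_sum fun s _ => ?_
        unfold bhFDPTerm
        split_ifs with h h' <;> first | exact le_rfl | positivity | exact absurd (hrej s h) h'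
    _ ≤ ℓ := sum_ite_inv_le_of_antitone (bhR_antitone.comp_monotone hP)

end BenjaminiHochberg

section Exchangeability

variable {Ω K β : Type*} [MeasurableSpace Ω] [MeasurableSpace β] [Fintype K] {μ : Measure Ω}
  {Y : K → Ω → β}

lemma integral_comp_perm_eq_of_iIndepFun (hY : ∀ k, Measurable (Y k)) (hind : iIndepFun Y μ)
    {e : Equiv.Perm K} (he : ∀ k, μ.map (Y (e k)) = μ.map (Y k)) {F : (K → β) → ℝ}
    (hF : Measurable F) :
    ∫ ω, F (fun k => Y (e k) ω) ∂μ = ∫ ω, F (fun k => Y k ω) ∂μ := by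
  have hlaw : μ.map (fun ω k => Y (e k) ω) = μ.map (fun ω k => Y k ω) := by
    rw [(hind.precomp e.injective).map_fun_eq_pi_map fun k => (hY (e k)).aemeasurable,
      hind.map_fun_eq_pi_map fun k => (hY k).aemeasurable, funext he]
  calc ∫ ω, F (fun k => Y (e k) ω) ∂μ = ∫ y, F y ∂(μ.map fun ω k => Y (e k) ω) :=
        (integral_map (measurable_pi_lambda _ fun k => hY (e k)).aemeasurable
          hF.aestronglyMeasurable).symm
    _ = ∫ y, F y ∂(μ.map fun ω k => Y k ω) := by rw [hlaw]
    _ = ∫ ω, F (fun k => Y k ω) ∂μ :=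
        integral_map (measurable_pi_lambda _ hY).aemeasurable hF.aestronglyMeasurable

lemma card_mul_integral_le_of_sum_comp_perm_le [IsProbabilityMeasure μ]
    (hY : ∀ k, Measurable (Y k)) (hind : iIndepFun Y μ) {G : Type*} [Fintype G]
    {γ : G → Equiv.Perm K} (hγ : ∀ g k, μ.map (Y (γ g k)) = μ.map (Y k)) {F : (K → β) → ℝ}
    (hF : Measurable F) {B : ℝ} (hFB : ∀ y, |F y| ≤ B) {C : ℝ}
    (hC : ∀ y, ∑ g, F (y ∘ γ g) ≤ C) :
    Fintype.card G * ∫ ω, F (fun k => Y k ω) ∂μ ≤ C := by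
  have hint : ∀ g, Integrable (fun ω => F (fun k => Y (γ g k) ω)) μ := fun g =>
    .of_bound (hF.comp (measurable_pi_lambda _ fun k => hY (γ g k))).aestronglyMeasurable B
      (ae_of_all _ fun _ => hFB _)
  calc Fintype.card G * ∫ ω, F (fun k => Y k ω) ∂μ
      = ∑ g, ∫ ω, F (fun k => Y (γ g k) ω) ∂μ := by
        simp [integral_comp_perm_eq_of_iIndepFun hY hind (hγ _) hF]
    _ = ∫ ω, ∑ g, F (fun k => Y (γ g k) ω) ∂μ := (integral_finsetSum _ fun g _ => hint g).symm
    _ ≤ ∫ _ω, C ∂μ :=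
        integral_mono (integrable_finsetSum _ fun g _ => hint g) (integrable_const C)
          fun ω => hC fun k => Y k ω
    _ = C := by simp

end Exchangeability

section EmpiricalPValues

variable {m n : ℕ} {D : Fin m → Finset ℕ}

/-- Scores are indexed by the test points `X j` (left) and by the calibration points `Z u` that
lie in some calibration set (right). -/
abbrev ScoreIndex (D : Fin m → Finset ℕ) : Type := Fin m ⊕ ↥(univ.biUnion D)

/-- The exchangeable block of hypothesis `i`: `X i` (as `none`) and its calibration points. -/
def blockEmb (D : Fin m → Finset ℕ) (i : Fin m) : Option (D i) ↪ ScoreIndex D where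
  toFun c := c.elim (.inl i) fun u => .inr ⟨u, mem_biUnion.2 ⟨i, mem_univ _, u.2⟩⟩
  inj' := by rintro (_ | ⟨u, hu⟩) (_ | ⟨u', hu'⟩) h <;> simp_all

lemma blockEmb_none (i : Fin m) : blockEmb D i none = .inl i := rfl

lemma blockEmb_some (i : Fin m) (u : D i) :
    blockEmb D i (some u) = .inr ⟨u, mem_biUnion.2 ⟨i, mem_univ _, u.2⟩⟩ := rfl

noncomputable def empiricalPValues (n : ℕ) (D : Fin m → Finset ℕ) (y : ScoreIndex D → ℝ)
    (j : Fin m) : ℝ :=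
  1 / n * ∑ u : D j, if y (blockEmb D j none) ≤ y (blockEmb D j (some u)) then 1 else 0

lemma measurable_bhFDPTerm_empiricalPValues (α : ℝ) (i : Fin m) :
    Measurable fun y => bhFDPTerm m α (empiricalPValues n D y) i := by
  -- the p-values only depend on the finitely many comparisons between scores
  let cmp : (ScoreIndex D → ℝ) → (j : Fin m) → D j → Prop := fun y j u =>
    y (blockEmb D j none) ≤ y (blockEmb D j (some u))
  have hcmp : Measurable cmp := measurable_pi_lambda _ fun j => measurable_pi_lambda _ fun u =>
    measurableSet_setOfPred.1 (measurableSet_le (measurable_pi_apply _) (measurable_pi_apply _))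
  exact (measurable_of_countable fun b : (j : Fin m) → D j → Prop =>
    bhFDPTerm m α (fun j => 1 / n * ∑ u : D j, if b j u then 1 else 0) i).comp hcmp

lemma empiricalPValues_mono {y y' : ScoreIndex D → ℝ} (hX : ∀ j, y' (.inl j) ≤ y (.inl j))
    (hZ : ∀ u, y (.inr u) ≤ y' (.inr u)) : empiricalPValues n D y ≤ empiricalPValues n D y' :=
  fun j => mul_le_mul_of_nonneg_left (sum_le_sum fun u _ => by
    have hXj : y' (blockEmb D j none) ≤ y (blockEmb D j none) := hX j
    have hZu : y (blockEmb D j (some u)) ≤ y' (blockEmb D j (some u)) := hZ _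
    by_cases h : y (blockEmb D j none) ≤ y (blockEmb D j (some u))
    · rw [if_pos h, if_pos (by linarith)]
    · rw [if_neg h]
      split_ifs <;> norm_num) (by positivity)

lemma empiricalPValues_le_of_block {i : Fin m} {y y' : ScoreIndex D → ℝ}
    (hoff : ∀ k ∉ Set.range (blockEmb D i), y' k = y k)
    (hX : y' (blockEmb D i none) ≤ y (blockEmb D i none))
    (hZ : ∀ u, y (blockEmb D i (some u)) ≤ y' (blockEmb D i (some u))) :
    empiricalPValues n D y ≤ empiricalPValues n D y' := by
  apply empiricalPValues_mono
  · intro j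
    by_cases hj : j = i
    · subst hj
      exact hX
    · refine (hoff _ ?_).le
      rintro ⟨_ | _, h⟩ <;>
        simp only [blockEmb_none, blockEmb_some, Sum.inl.injEq, reduceCtorEq] at h
      exact hj h.symm
  · intro u
    by_cases hu : ↑u ∈ D i
    · exact hZ ⟨u, hu⟩
    · refine (hoff _ ?_).ge
      rintro ⟨_ | ⟨v, hv⟩, h⟩ <;> simp only [blockEmb_none, blockEmb_some, reduceCtorEq,
        Sum.inr.injEq] at h
      exact hu (h ▸ hv)

lemma div_le_empiricalPValues {y : ScoreIndex D → ℝ} {i : Fin m} {s : ℕ}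
    (hs : s ≤ #{u : D i | y (blockEmb D i none) ≤ y (blockEmb D i (some u))}) :
    (s : ℝ) / n ≤ empiricalPValues n D y i := by
  rw [empiricalPValues, sum_boole, div_eq_inv_mul, one_div]
  gcongr

end EmpiricalPValues

section Pivot

variable {β : Type*} {n : ℕ}

lemma Fin.antitone_succAbove_left (t : Fin n) :
    Antitone fun p : Fin (n + 1) => p.succAbove t := by
  intro p q hpq
  simp only [Fin.succAbove, Fin.lt_def, Fin.le_def] at hpq ⊢
  split_ifs <;> simp only [Fin.val_castSucc, Fin.val_succ] <;> omega

lemma exists_equiv_antitone_comp {γ δ : Type*} [Fintype γ] [LinearOrder δ] {N : ℕ}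
    (hγ : Fintype.card γ = N) (w : γ → δ) : ∃ σ : Fin N ≃ γ, Antitone (w ∘ σ) := by
  set e := Fintype.equivFinOfCardEq hγ
  exact ⟨(Fin.revPerm.trans (Tuple.sort (w ∘ e.symm))).trans e.symm,
    fun _ _ h => Tuple.monotone_sort (w ∘ e.symm) (Fin.rev_le_rev.2 h)⟩

def pivotEquiv (s : Fin (n + 1)) (ψ : β ≃ Fin n) : Option β ≃ Fin (n + 1) :=
  (Equiv.optionCongr ψ).trans (finSuccEquiv' s).symm

@[simp]
lemma pivotEquiv_none (s : Fin (n + 1)) (ψ : β ≃ Fin n) : pivotEquiv s ψ none = s :=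
  finSuccEquiv'_symm_none s

@[simp]
lemma pivotEquiv_some (s : Fin (n + 1)) (ψ : β ≃ Fin n) (u : β) :
    pivotEquiv s ψ (some u) = s.succAbove (ψ u) :=
  finSuccEquiv'_symm_some s (ψ u)

lemma bijective_pivotEquiv [Fintype β] [DecidableEq β] (hβ : Fintype.card β = n) :
    Function.Bijective fun p : Fin (n + 1) × (β ≃ Fin n) => pivotEquiv p.1 p.2 := by
  rw [Fintype.bijective_iff_injective_and_card]
  refine ⟨fun ⟨s, ψ⟩ ⟨s', ψ'⟩ h => ?_, ?_⟩
  · have hs : s = s' := by simpa using congr($h none)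
    subst hs
    have hψ : ψ = ψ' := Equiv.ext fun u => by simpa using congr($h (some u))
    rw [hψ]
  · set e := Fintype.equivFinOfCardEq hβ
    simp [Fintype.card_equiv e, Fintype.card_equiv (pivotEquiv 0 e), hβ, Nat.factorial_succ]

lemma sum_perm_option_eq_sum_pivotEquiv [Fintype β] [DecidableEq β] (hβ : Fintype.card β = n)
    (σ : Fin (n + 1) ≃ Option β) (G : Equiv.Perm (Option β) → ℝ) :
    ∑ φ, G φ = ∑ ψ : β ≃ Fin n, ∑ s, G ((pivotEquiv s ψ).trans σ) := by
  rw [← Fintype.sum_prod_type_right (f := fun p => G ((pivotEquiv p.1 p.2).trans σ))]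
  exact (Fintype.sum_bijective _ ((Equiv.equivCongr (.refl _) σ).bijective.comp
    (bijective_pivotEquiv hβ)) _ _ fun _ => rfl).symm

lemma le_card_filter_le_succAbove [Fintype β] {v : Fin (n + 1) → ℝ} (hv : Antitone v)
    (s : Fin (n + 1)) (ψ : β ≃ Fin n) : (s : ℕ) ≤ #{u : β | v s ≤ v (s.succAbove (ψ u))} :=
  calc (s : ℕ) = #{t : Fin n | (t : ℕ) < s} := by rw [Fin.card_filter_val_lt]; omega
    _ = #{u : β | (ψ u : ℕ) < s} := card_equiv ψ.symm (by simp)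
    _ ≤ #{u : β | v s ≤ v (s.succAbove (ψ u))} := card_le_card fun u hu => by
        simp only [mem_filter, mem_univ, true_and] at hu ⊢
        rw [Fin.succAbove_of_castSucc_lt _ _ (Fin.lt_def.2 hu)]
        exact hv (Fin.le_def.2 hu.le)

end Pivot

section NullHypothesis

variable {m n ℓ : ℕ} {α : ℝ} {D : Fin m → Finset ℕ} {i : Fin m}

lemma sum_perm_bhFDPTerm_le (hn : 0 < n) (hα : 0 < α) (hℓ : (ℓ : ℝ) * m = α * (n + 1))
    (hDi : #(D i) = n) (y : ScoreIndex D → ℝ) :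
    ∑ φ : Equiv.Perm (Option (D i)),
        bhFDPTerm m α (empiricalPValues n D (y ∘ φ.viaFintypeEmbedding (blockEmb D i))) i
      ≤ n.factorial * ℓ := by
  have hcard : Fintype.card (D i) = n := by simp [hDi]
  obtain ⟨σ, hσ⟩ :=
    exists_equiv_antitone_comp (N := n + 1) (by simp [hcard]) (y ∘ blockEmb D i)
  set v := (y ∘ blockEmb D i) ∘ σ
  rw [sum_perm_option_eq_sum_pivotEquiv hcard σ fun φ =>
    bhFDPTerm m α (empiricalPValues n D (y ∘ φ.viaFintypeEmbedding (blockEmb D i))) i]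
  calc _ ≤ ∑ _ψ : D i ≃ Fin n, (ℓ : ℝ) := sum_le_sum fun ψ _ => ?_
    _ = n.factorial * ℓ := by
      simp [Fintype.card_equiv (Fintype.equivFinOfCardEq hcard), hcard]
  have hval : ∀ s c, (y ∘ Equiv.Perm.viaFintypeEmbedding ((pivotEquiv s ψ).trans σ)
      (blockEmb D i)) (blockEmb D i c) = v (pivotEquiv s ψ c) := fun s c => by
    simp only [Function.comp_apply, Equiv.Perm.viaFintypeEmbedding_apply_image, Equiv.trans_apply,
      v]
  refine sum_bhFDPTerm_le_of_monotone hn hα hℓ (fun s s' hss => ?_) fun s => ?_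
  · refine empiricalPValues_le_of_block (i := i) (fun k hk => ?_) ?_ fun u => ?_
    · simp only [Function.comp_apply, Equiv.Perm.viaFintypeEmbedding_apply_notMem_range _ _ hk]
    · simpa only [hval, pivotEquiv_none] using hσ hss
    · simpa only [hval, pivotEquiv_some] using hσ (Fin.antitone_succAbove_left (ψ u) hss)
  · apply div_le_empiricalPValues
    simpa only [hval, pivotEquiv_none, pivotEquiv_some] using le_card_filter_le_succAbove hσ s ψ

lemma integral_bhFDPTerm_le {Ω : Type*} [MeasurableSpace Ω] {μ : Measure Ω}
    [IsProbabilityMeasure μ] {Y : ScoreIndex D → Ω → ℝ} (hY : ∀ k, Measurable (Y k))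
    (hind : iIndepFun Y μ)
    (hlaw : ∀ c, μ.map (Y (blockEmb D i c)) = μ.map (Y (blockEmb D i none)))
    (hn : 0 < n) (hα : 0 < α) (hℓ : (ℓ : ℝ) * m = α * (n + 1)) (hDi : #(D i) = n) :
    ∫ ω, bhFDPTerm m α (empiricalPValues n D fun k => Y k ω) i ∂μ ≤ ℓ / (n + 1) := by
  have hγ : ∀ (φ : Equiv.Perm (Option (D i))) k,
      μ.map (Y (φ.viaFintypeEmbedding (blockEmb D i) k)) = μ.map (Y k) := by
    intro φ k
    by_cases hk : k ∈ Set.range (blockEmb D i)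
    · obtain ⟨c, rfl⟩ := hk
      rw [Equiv.Perm.viaFintypeEmbedding_apply_image, hlaw, hlaw c]
    · rw [Equiv.Perm.viaFintypeEmbedding_apply_notMem_range _ _ hk]
  have h := card_mul_integral_le_of_sum_comp_perm_le hY hind hγ
    (measurable_bhFDPTerm_empiricalPValues α i) (fun _ => abs_bhFDPTerm_le_one hα.le _ i)
    (sum_perm_bhFDPTerm_le hn hα hℓ hDi)
  rw [Fintype.card_perm, Fintype.card_option, Fintype.card_coe, hDi, Nat.factorial_succ] at h
  push_cast at h
  have hfac : (0 : ℝ) < n.factorial := by positivity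
  rw [le_div_iff₀ (by positivity)]
  refine le_of_mul_le_mul_left ?_ hfac
  linarith

lemma integral_bhFDP_le {Ω : Type*} [MeasurableSpace Ω] {μ : Measure Ω} [IsProbabilityMeasure μ]
    {H0 : Finset (Fin m)} {Y : ScoreIndex D → Ω → ℝ} (hY : ∀ k, Measurable (Y k))
    (hind : iIndepFun Y μ)
    (hlaw : ∀ i ∈ H0, ∀ c, μ.map (Y (blockEmb D i c)) = μ.map (Y (blockEmb D i none)))
    (hn : 0 < n) (hα : 0 < α) (hℓ : (ℓ : ℝ) * m = α * (n + 1)) (hD : ∀ i, #(D i) = n) :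
    ∫ ω, bhFDP m α H0 (empiricalPValues n D fun k => Y k ω) ∂μ ≤ #H0 * (ℓ / (n + 1)) := by
  have hint : ∀ i, Integrable (fun ω => bhFDPTerm m α (empiricalPValues n D fun k => Y k ω) i) μ :=
    fun i => .of_bound ((measurable_bhFDPTerm_empiricalPValues α i).comp
      (measurable_pi_lambda _ hY)).aestronglyMeasurable 1
      (ae_of_all _ fun _ => abs_bhFDPTerm_le_one hα.le _ i)
  simp_rw [bhFDP_eq_sum_bhFDPTerm]
  rw [integral_finsetSum _ fun i _ => hint i, ← nsmul_eq_mul, ← sum_const]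
  exact sum_le_sum fun i hi => integral_bhFDPTerm_le hY hind (hlaw i hi) hn hα hℓ (hD i)

end NullHypothesis

section Scores

variable {Ω 𝒳 : Type*} {m : ℕ} {a : 𝒳 → ℝ} {X : Fin m → Ω → 𝒳} {Z : ℕ → Ω → 𝒳}
  {D : Fin m → Finset ℕ}

def scores (a : 𝒳 → ℝ) (X : Fin m → Ω → 𝒳) (Z : ℕ → Ω → 𝒳) (D : Fin m → Finset ℕ)
    (k : ScoreIndex D) : Ω → ℝ :=
  a ∘ Sum.elim X Z (Sum.map id Subtype.val k)

lemma empiricalPValues_scores (n : ℕ) (ω : Ω) :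
    empiricalPValues n D (fun k => scores a X Z D k ω) =
      fun i => 1 / (n : ℝ) * ∑ u ∈ D i, if a (X i ω) ≤ a (Z u ω) then 1 else 0 := by
  ext j
  rw [empiricalPValues, ← sum_coe_sort (D j)]
  rfl

variable [MeasurableSpace Ω] [MeasurableSpace 𝒳] {μ : Measure Ω}

lemma measurable_scores (ha : Measurable a) (hX : ∀ i, Measurable (X i))
    (hZ : ∀ j, Measurable (Z j)) (k : ScoreIndex D) : Measurable (scores a X Z D k) := by
  rcases k with j | u
  exacts [ha.comp (hX j), ha.comp (hZ u)]

lemma iIndepFun_scores (ha : Measurable a) (hindep : iIndepFun (Sum.elim X Z) μ) :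
    iIndepFun (scores a X Z D) μ :=
  (hindep.comp _ fun _ => ha).precomp (g := Sum.map id Subtype.val)
    (Sum.map_injective.2 ⟨Function.injective_id, Subtype.val_injective⟩)

lemma map_scores_blockEmb {P0 : Measure 𝒳} (ha : Measurable a) (hX : ∀ i, Measurable (X i))
    (hZ : ∀ j, Measurable (Z j)) {i : Fin m} (hXi : μ.map (X i) = P0)
    (hZlaw : ∀ j, μ.map (Z j) = P0) (c : Option (D i)) :
    μ.map (scores a X Z D (blockEmb D i c)) = μ.map (scores a X Z D (blockEmb D i none)) := by
  rcases c with _ | u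
  · rfl
  · change μ.map (a ∘ Z u) = μ.map (a ∘ X i)
    rw [← Measure.map_map ha (hZ u), ← Measure.map_map ha (hX i), hZlaw, hXi]

end Scores

theorem bh_overlapping_calibration_fdr_upper_bound_general
    {Ω 𝒳 : Type*} [MeasurableSpace Ω] [MeasurableSpace 𝒳]
    (μ : Measure Ω) [IsProbabilityMeasure μ]
    (P0 : Measure 𝒳)
    (m n m0 : ℕ) (hm : 0 < m) (hn : 0 < n)
    (H0 : Finset (Fin m)) (hcard : H0.card = m0)
    (a : 𝒳 → ℝ) (ha : Measurable a)
    (X : Fin m → Ω → 𝒳) (Z : ℕ → Ω → 𝒳)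
    (D : Fin m → Finset ℕ) (hD : ∀ i, (D i).card = n)
    (hXmeas : ∀ i, Measurable (X i)) (hZmeas : ∀ j, Measurable (Z j))
    (hindep : iIndepFun
      (Sum.elim X Z : Fin m ⊕ ℕ → Ω → 𝒳) μ)
    (hXlaw : ∀ i ∈ H0, μ.map (X i) = P0)
    (hZlaw : ∀ j, μ.map (Z j) = P0)
    (α : ℝ) (hα : α ∈ Set.Ioc (0 : ℝ) 1)
    (hcal : ∃ ℓ : ℕ, 1 ≤ ℓ ∧ (n : ℝ) = (ℓ : ℝ) * m / α - 1) :
    ∫ ω, bhFDP m α H0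
        (fun i => (1 / (n : ℝ)) * ∑ u ∈ D i, if a (X i ω) ≤ a (Z u ω) then (1 : ℝ) else 0) ∂μ
      ≤ m0 * α / m := by
  obtain ⟨ℓ, -, hℓn⟩ := hcal
  have hℓ : (ℓ : ℝ) * m = α * (n + 1) := by
    rw [hℓn]
    field_simp [hα.1.ne']
    ring
  calc _ = ∫ ω, bhFDP m α H0 (empiricalPValues n D fun k => scores a X Z D k ω) ∂μ := by
        simp_rw [empiricalPValues_scores]
    _ ≤ #H0 * (ℓ / (n + 1)) :=
        integral_bhFDP_le (measurable_scores ha hXmeas hZmeas) (iIndepFun_scores ha hindep)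
          (fun i hi => map_scores_blockEmb ha hXmeas hZmeas (hXlaw i hi) hZlaw) hn hα.1 hℓ hD
    _ = m0 * α / m := by
        have : (m : ℝ) ≠ 0 := by exact_mod_cast hm.ne'
        rw [hcard]
        field_simp
        linear_combination (m0 : ℝ) * hℓ

/-- with empirical p-values computed from (possibly overlapping)
calibration sets `Z_{D i}` of cardinality `n = ℓ m / α - 1` (with `ℓ m / α` an integer)
drawn from a common pool of i.i.d. `P0` points, BH at level `α` satisfies
`FDR ≤ m0 * α / m`. -/
theorem bh_overlapping_calibration_fdr_upper_bound
    {Ω 𝒳 : Type*} [MeasurableSpace Ω] [MeasurableSpace 𝒳]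
    (μ : Measure Ω) [IsProbabilityMeasure μ]
    (P0 : Measure 𝒳) [IsProbabilityMeasure P0]
    (m n m0 : ℕ) (hm : 0 < m) (hn : 0 < n)
    (H0 : Finset (Fin m)) (hcard : H0.card = m0)
    (a : 𝒳 → ℝ) (ha : Measurable a)
    (X : Fin m → Ω → 𝒳) (Z : ℕ → Ω → 𝒳)
    (D : Fin m → Finset ℕ) (hD : ∀ i, (D i).card = n)
    (hXmeas : ∀ i, Measurable (X i)) (hZmeas : ∀ j, Measurable (Z j))
    (hindep : iIndepFun
      (Sum.elim X Z : Fin m ⊕ ℕ → Ω → 𝒳) μ)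
    (hXlaw : ∀ i ∈ H0, μ.map (X i) = P0)
    (hZlaw : ∀ j, μ.map (Z j) = P0)
    (hatomless : ∀ r : ℝ, P0 {x | a x = r} = 0)
    (α : ℝ) (hα : α ∈ Set.Ioc (0 : ℝ) 1)
    (hcal : ∃ ℓ : ℕ, 1 ≤ ℓ ∧ (n : ℝ) = (ℓ : ℝ) * m / α - 1) :
    ∫ ω, bhFDP m α H0
        (fun i => (1 / (n : ℝ)) * ∑ u ∈ D i, if a (X i ω) ≤ a (Z u ω) then (1 : ℝ) else 0) ∂μ
      ≤ m0 * α / m :=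
  bh_overlapping_calibration_fdr_upper_bound_general μ P0 m n m0 hm hn H0 hcard a ha X Z D hD hXmeas
    hZmeas hindep hXlaw hZlaw α hα hcal
end

section
/- In the setting of empirical p-values with overlapping calibration sets, fix an index i and let Z_{D_i} denote the calibration score vector of p̂_i. For every nondecreasing measurable set A ⊆ [0,1]^m and every pair of score vectors z, z′ with z ⪰ z′ (componentwise), P[(p̂_1,…,p̂_m) ∈ A | Z_{D_i} = z] ≥ P[(p̂_1,…,p̂_m) ∈ A | Z_{D_i} = z′]. -/
open MeasureTheory ProbabilityTheory Finset
open scoped Classical ENNReal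

/-- A set `A ⊆ ℝ^m` is nondecreasing if it is upward closed for the componentwise order. -/
def IsNondecreasingSet {m : ℕ} (A : Set (Fin m → ℝ)) : Prop :=
  ∀ x ∈ A, ∀ y : Fin m → ℝ, (∀ j, x j ≤ y j) → y ∈ A

/- By independence of `Z` from the test points and the other calibration points, conditioning
on `Z_{D i} = ζ` amounts to substituting the fixed points `ζ` for the coordinates of `Z` indexed
by `D i`. After this substitution every p̂_j is, pointwise in ω, a nondecreasing function of the
scores of the substituted points, so for an upward-closed `A` the event for `ζ'` is contained
in the event for `ζ`. -/

lemma IsNondecreasingSet.setOf_subset {m : ℕ} {A : Set (Fin m → ℝ)} (hA : IsNondecreasingSet A)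
    {Ω : Type*} {f g : Ω → Fin m → ℝ} (hfg : ∀ ω j, f ω j ≤ g ω j) :
    {ω | f ω ∈ A} ⊆ {ω | g ω ∈ A} :=
  fun ω hω => hA _ hω _ (hfg ω)

lemma ite_le_ite_of_le_right {β : Type*} [Preorder β] {s t t' : β} (ht : t' ≤ t) :
    (if s ≤ t' then (1 : ℝ) else 0) ≤ if s ≤ t then 1 else 0 := by
  by_cases h : s ≤ t'
  · simp [h, h.trans ht]
  · simp only [h, if_false]
    split_ifs <;> norm_num

lemma empirical_pvalue_mono {ι α β : Type*} [Preorder β] (s : Finset ι) (a : α → β) (x : α) {c : ℝ}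
    (hc : 0 ≤ c) {z z' : ι → α} (hz : ∀ u ∈ s, a (z' u) ≤ a (z u)) :
    c * ∑ u ∈ s, (if a x ≤ a (z' u) then (1 : ℝ) else 0)
      ≤ c * ∑ u ∈ s, (if a x ≤ a (z u) then (1 : ℝ) else 0) :=
  mul_le_mul_of_nonneg_left (sum_le_sum fun u hu => ite_le_ite_of_le_right (hz u hu)) hc

theorem overlapping_calibration_monotone_conditional_general
    {Ω 𝒳 : Type*} [MeasurableSpace Ω]
    (μ : Measure Ω)
    (m n : ℕ)
    (a : 𝒳 → ℝ)
    (X : Fin m → Ω → 𝒳) (Z : ℕ → Ω → 𝒳)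
    (D : Fin m → Finset ℕ)
    (i : Fin m)
    (A : Set (Fin m → ℝ)) (hmono : IsNondecreasingSet A)
    (ζ ζ' : ℕ → 𝒳) (hζ : ∀ u ∈ D i, a (ζ' u) ≤ a (ζ u)) :
    μ {ω | (fun j => (1 / (n : ℝ)) * ∑ u ∈ D j,
        if a (X j ω) ≤ a (if u ∈ D i then ζ' u else Z u ω) then (1 : ℝ) else 0) ∈ A}
      ≤ μ {ω | (fun j => (1 / (n : ℝ)) * ∑ u ∈ D j,
        if a (X j ω) ≤ a (if u ∈ D i then ζ u else Z u ω) then (1 : ℝ) else 0) ∈ A} := by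
  refine measure_mono (hmono.setOf_subset fun ω j => ?_)
  refine empirical_pvalue_mono (D j) a (X j ω) (by positivity) fun u _ => ?_
  split_ifs with hu
  · exact hζ u hu
  · exact le_rfl

/-- in the overlapping-calibration setting, conditioning on the value of
the calibration vector `Z_{D i}` (by independence, this amounts to substituting fixed
points `ζ` for the coordinates of `Z` indexed by `D i`), the conditional probability that
the p-value vector belongs to a nondecreasing measurable set `A` is monotone in the
calibration scores: if `a (ζ' u) ≤ a (ζ u)` for all `u ∈ D i`, then
`P[p̂ ∈ A | Z_{D i} = ζ] ≥ P[p̂ ∈ A | Z_{D i} = ζ']`. -/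
theorem overlapping_calibration_monotone_conditional
    {Ω 𝒳 : Type*} [MeasurableSpace Ω] [MeasurableSpace 𝒳]
    (μ : Measure Ω) [IsProbabilityMeasure μ]
    (P0 : Measure 𝒳) [IsProbabilityMeasure P0]
    (m n : ℕ) (hm : 0 < m) (hn : 0 < n)
    (a : 𝒳 → ℝ) (ha : Measurable a)
    (X : Fin m → Ω → 𝒳) (Z : ℕ → Ω → 𝒳)
    (D : Fin m → Finset ℕ) (hD : ∀ i, (D i).card = n)
    (hXmeas : ∀ i, Measurable (X i)) (hZmeas : ∀ j, Measurable (Z j))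
    (hindep : iIndepFun
      (Sum.elim X Z : Fin m ⊕ ℕ → Ω → 𝒳) μ)
    (hZlaw : ∀ j, μ.map (Z j) = P0)
    (i : Fin m)
    (A : Set (Fin m → ℝ)) (hA : MeasurableSet A) (hmono : IsNondecreasingSet A)
    (ζ ζ' : ℕ → 𝒳) (hζ : ∀ u ∈ D i, a (ζ' u) ≤ a (ζ u)) :
    μ {ω | (fun j => (1 / (n : ℝ)) * ∑ u ∈ D j,
        if a (X j ω) ≤ a (if u ∈ D i then ζ' u else Z u ω) then (1 : ℝ) else 0) ∈ A}
      ≤ μ {ω | (fun j => (1 / (n : ℝ)) * ∑ u ∈ D j,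
        if a (X j ω) ≤ a (if u ∈ D i then ζ u else Z u ω) then (1 : ℝ) else 0) ∈ A} :=
  overlapping_calibration_monotone_conditional_general μ m n a X Z D i A hmono ζ ζ' hζ
end

section
/- Let ((p̂_t, A_t))_{t≥1} be an i.i.d. sequence of pairs with values in [0,1] × {0,1} (A_t is the anomaly indicator). Fix an integer m ≥ 1 and a measurable function f_m : [0,1]^m → [0,1], and define blockwise (disjoint-window) thresholds ε_{d,t} = f_m(p̂_{km+1},…,p̂_{(k+1)m}) for every t ∈ {km+1,…,(k+1)m} and k ≥ 0. Assume the expected number of rejections in a block, E[Σ_{t=1}^m 1[p̂_t ≤ ε_{d,t}]], is strictly positive. Then almost surely, as T = km → ∞, the false discovery proportion FDP_1^T = (Σ_{t=1}^T 1[p̂_t ≤ ε_{d,t}](1 − A_t)) / (Σ_{t=1}^T 1[p̂_t ≤ ε_{d,t}]) converges to the modified FDR of one block: mFDR_1^m = E[Σ_{t=1}^m 1[p̂_t ≤ ε_{d,t}](1 − A_t)] / E[Σ_{t=1}^m 1[p̂_t ≤ ε_{d,t}]]. -/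
/-!
Cut the time axis into the disjoint windows `{m k, …, m k + m - 1}`. The windows of the i.i.d.
pairs `(p̂ t, A t)` are i.i.d. random vectors, and the numbers of rejections and of false
rejections inside window `k` are fixed measurable, bounded functions of the `k`-th window. So
numerator and denominator of `FDP_1^{km}` are partial sums of i.i.d. bounded variables; dividing
both by `k` and applying the strong law of large numbers to each gives the limit.
-/

open MeasureTheory ProbabilityTheory Finset Filter

lemma Finset.sum_range_mul_eq_sum_fin {M : Type*} [AddCommMonoid M] (h : ℕ → M) (m k : ℕ) :
    ∑ t ∈ range (m * k), h t = ∑ i ∈ range k, ∑ j : Fin m, h (m * i + j) := by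
  induction k with
  | zero => simp
  | succ k ih => rw [Nat.mul_succ, sum_range_add, ih, sum_range_succ,
      Fin.sum_univ_eq_sum_range fun j => h (m * k + j)]

lemma Nat.mul_add_fin_injective (m k : ℕ) : Function.Injective fun j : Fin m => m * k + (j : ℕ) :=
  fun _ _ h => Fin.val_injective (Nat.add_left_cancel h)

lemma Nat.mul_add_fin_div {m : ℕ} (k : ℕ) (j : Fin m) : (m * k + j) / m = k := by
  rw [Nat.mul_add_div j.pos, Nat.div_eq_of_lt j.isLt, add_zero]

namespace ProbabilityTheory

variable {Ω β : Type*} [MeasurableSpace Ω] [MeasurableSpace β] {μ : Measure Ω}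

def window (X : ℕ → Ω → β) (m k : ℕ) : Ω → Fin m → β := fun ω j => X (m * k + j) ω

lemma measurable_window {X : ℕ → Ω → β} (hX : ∀ t, Measurable (X t)) (m k : ℕ) :
    Measurable (window X m k) :=
  measurable_pi_lambda _ fun _ => hX _

lemma iIndepFun.identDistrib_window {X : ℕ → Ω → β} (hX : ∀ t, Measurable (X t))
    (hindep : iIndepFun X μ) (hident : ∀ t, μ.map (X t) = μ.map (X 0)) (m k : ℕ) :
    IdentDistrib (window X m k) (window X m 0) μ μ := by
  have hlaw : ∀ k, μ.map (window X m k) = Measure.pi fun _ : Fin m => μ.map (X 0) := fun k => by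
    unfold window
    rw [(hindep.precomp (Nat.mul_add_fin_injective m k)).map_fun_eq_pi_map
      fun _ => (hX _).aemeasurable]
    simp only [hident]
  exact ⟨(measurable_window hX m k).aemeasurable, (measurable_window hX m 0).aemeasurable,
    by rw [hlaw, hlaw]⟩

lemma iIndepFun.indepFun_window {X : ℕ → Ω → β} (hX : ∀ t, Measurable (X t))
    (hindep : iIndepFun X μ) (m : ℕ) {k l : ℕ} (hkl : k ≠ l) :
    IndepFun (window X m k) (window X m l) μ := by
  let S (k : ℕ) : Finset ℕ := univ.image fun j : Fin m => m * k + (j : ℕ)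
  have hmem (k : ℕ) (j : Fin m) : m * k + (j : ℕ) ∈ S k := mem_image_of_mem _ (mem_univ j)
  have hdisj : Disjoint (S k) (S l) := by
    simp only [S, disjoint_left, mem_image, mem_univ, true_and]
    rintro _ ⟨a, rfl⟩ ⟨b, hb⟩
    exact hkl (by rw [← Nat.mul_add_fin_div k a, ← hb, Nat.mul_add_fin_div])
  have hrestrict (k : ℕ) : Measurable fun v : S k → β => fun j : Fin m => v ⟨_, hmem k j⟩ :=
    measurable_pi_lambda _ fun _ => measurable_pi_apply _
  exact (hindep.indepFun_finset _ _ hdisj hX).comp (hrestrict k) (hrestrict l)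

lemma ae_tendsto_sum_div_sum {Y Z : ℕ → Ω → ℝ}
    (hYint : Integrable (Y 0) μ) (hYindep : Pairwise (Function.onFun (IndepFun · · μ) Y))
    (hYident : ∀ i, IdentDistrib (Y i) (Y 0) μ μ)
    (hZint : Integrable (Z 0) μ) (hZindep : Pairwise (Function.onFun (IndepFun · · μ) Z))
    (hZident : ∀ i, IdentDistrib (Z i) (Z 0) μ μ) (hY0 : μ[Y 0] ≠ 0) :
    ∀ᵐ ω ∂μ, Tendsto (fun n => (∑ i ∈ range n, Z i ω) / ∑ i ∈ range n, Y i ω) atTop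
      (nhds (μ[Z 0] / μ[Y 0])) := by
  filter_upwards [strong_law_ae_real Y hYint hYindep hYident,
    strong_law_ae_real Z hZint hZindep hZident] with ω hY hZ
  refine (hZ.div hY hY0).congr' ?_
  filter_upwards [eventually_ne_atTop 0] with n hn
  exact div_div_div_cancel_right₀ (Nat.cast_ne_zero.mpr hn) _ _

lemma iIndepFun.ae_tendsto_sum_window_div_sum_window {X : ℕ → Ω → β}
    (hX : ∀ t, Measurable (X t)) (hindep : iIndepFun X μ)
    (hident : ∀ t, μ.map (X t) = μ.map (X 0)) {m : ℕ} {g h : (Fin m → β) → ℝ}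
    (hg : Measurable g) (hh : Measurable h)
    (hgint : Integrable (fun ω => g (window X m 0 ω)) μ)
    (hhint : Integrable (fun ω => h (window X m 0 ω)) μ)
    (hpos : ∫ ω, h (window X m 0 ω) ∂μ ≠ 0) :
    ∀ᵐ ω ∂μ, Tendsto
      (fun n => (∑ i ∈ range n, g (window X m i ω)) / ∑ i ∈ range n, h (window X m i ω)) atTop
      (nhds ((∫ ω, g (window X m 0 ω) ∂μ) / ∫ ω, h (window X m 0 ω) ∂μ)) :=
  ae_tendsto_sum_div_sum (Y := fun i ω => h (window X m i ω)) (Z := fun i ω => g (window X m i ω))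
    hhint (fun _ _ hkl => (hindep.indepFun_window hX m hkl).comp hh hh)
    (fun i => (hindep.identDistrib_window hX hident m i).comp hh)
    hgint (fun _ _ hkl => (hindep.indepFun_window hX m hkl).comp hg hg)
    (fun i => (hindep.identDistrib_window hX hident m i).comp hg) hpos

end ProbabilityTheory

section WindowRejections

variable {m : ℕ} (f : (Fin m → ℝ) → ℝ)

/-- The rejections in a window of pairs `(p̂, A)`, each weighted by `u (p̂, A)`: `u = 1` counts
the rejections, `u (p̂, A) = 1 - A` the false ones. -/
noncomputable def windowRejections (u : ℝ × ℝ → ℝ) (v : Fin m → ℝ × ℝ) : ℝ :=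
  ∑ j, (if (v j).1 ≤ f (fun i => (v i).1) then 1 else 0) * u (v j)

variable {f}

lemma measurable_windowRejections (hf : Measurable f) {u : ℝ × ℝ → ℝ} (hu : Measurable u) :
    Measurable (windowRejections f u) :=
  Finset.measurable_sum _ fun j _ => (Measurable.ite
    (measurableSet_le (measurable_pi_apply j).fst
      (hf.comp (measurable_pi_lambda _ fun i => (measurable_pi_apply i).fst)))
    measurable_const measurable_const).mul (hu.comp (measurable_pi_apply j))

lemma abs_windowRejections_le {u : ℝ × ℝ → ℝ} {v : Fin m → ℝ × ℝ} (hu : ∀ j, |u (v j)| ≤ 1) :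
    |windowRejections f u v| ≤ m := by
  have hterm (j : Fin m) : |(if (v j).1 ≤ f (fun i => (v i).1) then 1 else 0) * u (v j)| ≤ 1 := by
    split_ifs
    exacts [by simpa using hu j, by simp]
  unfold windowRejections
  simpa using (abs_sum_le_sum_abs _ _).trans (sum_le_sum fun j (_ : j ∈ univ) => hterm j)

variable {Ω : Type*} {p A ε : ℕ → Ω → ℝ}

lemma sum_range_ite_mul_eq_sum_windowRejections
    (hε : ∀ t ω, ε t ω = f (fun j : Fin m => p (m * (t / m) + j) ω)) (u : ℝ × ℝ → ℝ)
    (k : ℕ) (ω : Ω) :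
    ∑ t ∈ range (k * m), (if p t ω ≤ ε t ω then 1 else 0) * u (p t ω, A t ω) =
      ∑ i ∈ range k, windowRejections f u (window (fun t ω => (p t ω, A t ω)) m i ω) := by
  rw [mul_comm, sum_range_mul_eq_sum_fin]
  refine sum_congr rfl fun i _ => sum_congr rfl fun j _ => ?_
  rw [hε, Nat.mul_add_fin_div]
  rfl

lemma sum_range_ite_mul_eq_windowRejections_window_zero
    (hε : ∀ t ω, ε t ω = f (fun j : Fin m => p (m * (t / m) + j) ω)) (u : ℝ × ℝ → ℝ) (ω : Ω) :
    ∑ t ∈ range m, (if p t ω ≤ ε t ω then 1 else 0) * u (p t ω, A t ω) =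
      windowRejections f u (window (fun t ω => (p t ω, A t ω)) m 0 ω) := by
  simpa using sum_range_ite_mul_eq_sum_windowRejections hε u 1 ω

end WindowRejections

theorem fdp_tendsto_mfdr_disjoint_windows_general
    {Ω : Type*} [MeasurableSpace Ω] (μ : Measure Ω) [IsProbabilityMeasure μ]
    (p A : ℕ → Ω → ℝ)
    (hmeas : ∀ t, Measurable fun ω => (p t ω, A t ω))
    (hA : ∀ t ω, A t ω = 0 ∨ A t ω = 1)
    (hindep : iIndepFun (fun t ω => (p t ω, A t ω)) μ)
    (hident : ∀ t, μ.map (fun ω => (p t ω, A t ω)) = μ.map (fun ω => (p 0 ω, A 0 ω)))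
    (m : ℕ)
    (f : (Fin m → ℝ) → ℝ) (hf : Measurable f)
    (ε : ℕ → Ω → ℝ)
    (hε : ∀ t ω, ε t ω = f (fun j : Fin m => p (m * (t / m) + (j : ℕ)) ω))
    (hpos : 0 < ∫ ω, ∑ t ∈ Finset.range m,
        (if p t ω ≤ ε t ω then (1 : ℝ) else 0) ∂μ) :
    ∀ᵐ ω ∂μ, Tendsto
      (fun k : ℕ =>
        (∑ t ∈ Finset.range (k * m),
            (if p t ω ≤ ε t ω then (1 : ℝ) else 0) * (1 - A t ω)) /
        (∑ t ∈ Finset.range (k * m), if p t ω ≤ ε t ω then (1 : ℝ) else 0))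
      atTop
      (nhds ((∫ ω', ∑ t ∈ Finset.range m,
            (if p t ω' ≤ ε t ω' then (1 : ℝ) else 0) * (1 - A t ω') ∂μ) /
          (∫ ω', ∑ t ∈ Finset.range m,
            (if p t ω' ≤ ε t ω' then (1 : ℝ) else 0) ∂μ))) := by
  set X : ℕ → Ω → ℝ × ℝ := fun t ω => (p t ω, A t ω)
  have hnum := sum_range_ite_mul_eq_sum_windowRejections (A := A) hε fun x => 1 - x.2
  have hnum₁ := sum_range_ite_mul_eq_windowRejections_window_zero (A := A) hε fun x => 1 - x.2
  have hden := sum_range_ite_mul_eq_sum_windowRejections (A := A) hε fun _ => 1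
  have hden₁ := sum_range_ite_mul_eq_windowRejections_window_zero (A := A) hε fun _ => 1
  simp only [mul_one] at hnum hnum₁ hden hden₁
  have hbounded {u : ℝ × ℝ → ℝ} (hu : Measurable u) (hu1 : ∀ t ω, |u (X t ω)| ≤ 1) :
      Integrable (fun ω => windowRejections f u (window X m 0 ω)) μ :=
    .of_bound ((measurable_windowRejections hf hu).comp
      (measurable_window hmeas m 0)).aestronglyMeasurable m
      (.of_forall fun ω => abs_windowRejections_le fun j => hu1 _ ω)
  have hA1 (t : ℕ) (ω : Ω) : |1 - (X t ω).2| ≤ 1 := by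
    rcases hA t ω with h | h <;> simp [X, h]
  simp only [hnum, hden, hnum₁, hden₁] at hpos ⊢
  exact hindep.ae_tendsto_sum_window_div_sum_window hmeas hident
    (measurable_windowRejections hf (measurable_const.sub measurable_snd))
    (measurable_windowRejections hf measurable_const)
    (hbounded (measurable_const.sub measurable_snd) hA1)
    (hbounded measurable_const fun _ _ => by simp) hpos.ne'

/-- for an i.i.d. sequence of pairs `(p̂ t, A t)` and blockwise
(disjoint-window) thresholds `ε t = f (p̂ over the block of length m containing t)`, with a
strictly positive expected number of rejections per block, the false discovery proportion
`FDP_1^{km}` converges almost surely, as `k → ∞`, to the modified FDR of one block. -/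
theorem fdp_tendsto_mfdr_disjoint_windows
    {Ω : Type*} [MeasurableSpace Ω] (μ : Measure Ω) [IsProbabilityMeasure μ]
    (p A : ℕ → Ω → ℝ)
    (hmeas : ∀ t, Measurable fun ω => (p t ω, A t ω))
    (hp : ∀ t ω, p t ω ∈ Set.Icc (0 : ℝ) 1)
    (hA : ∀ t ω, A t ω = 0 ∨ A t ω = 1)
    (hindep : iIndepFun (fun t ω => (p t ω, A t ω)) μ)
    (hident : ∀ t, μ.map (fun ω => (p t ω, A t ω)) = μ.map (fun ω => (p 0 ω, A 0 ω)))
    (m : ℕ) (hm : 0 < m)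
    (f : (Fin m → ℝ) → ℝ) (hf : Measurable f) (hfr : ∀ x, f x ∈ Set.Icc (0 : ℝ) 1)
    (ε : ℕ → Ω → ℝ)
    (hε : ∀ t ω, ε t ω = f (fun j : Fin m => p (m * (t / m) + (j : ℕ)) ω))
    (hpos : 0 < ∫ ω, ∑ t ∈ Finset.range m,
        (if p t ω ≤ ε t ω then (1 : ℝ) else 0) ∂μ) :
    ∀ᵐ ω ∂μ, Tendsto
      (fun k : ℕ =>
        (∑ t ∈ Finset.range (k * m),
            (if p t ω ≤ ε t ω then (1 : ℝ) else 0) * (1 - A t ω)) /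
        (∑ t ∈ Finset.range (k * m), if p t ω ≤ ε t ω then (1 : ℝ) else 0))
      atTop
      (nhds ((∫ ω', ∑ t ∈ Finset.range m,
            (if p t ω' ≤ ε t ω' then (1 : ℝ) else 0) * (1 - A t ω') ∂μ) /
          (∫ ω', ∑ t ∈ Finset.range m,
            (if p t ω' ≤ ε t ω' then (1 : ℝ) else 0) ∂μ))) :=
  fdp_tendsto_mfdr_disjoint_windows_general μ p A hmeas hA hindep hident m f hf ε hε hpos
end
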